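/- arXiv:2305.08731 — 5 statements merged into one kernel-verified Lean document; each statement's English description precedes it below -/
import Mathlib

section
/- The operator $B : \mathcal{H}_N \to L^2_{1/\rho_0}$ defined by $(B\Phi)(r) = N\int \overline{\Psi_0(r,\tilde r)}\Phi(r,\tilde r) d\tilde r - \langle \Psi_0, \Phi\rangle \rho_0(r)$ is bounded with operator norm at most $N$, where $L^2_{1/\rho_0}$ is the $L^2$ space on $\mathrm{supp}(\rho_0)$ with weight $\rho_0^{-1}$. -/
/-!
Write `S = ⟨Ψ0, Φ⟩`. Since `ρ0(r) = N ∫ |Ψ0(r,·)|²`, the value `(BΦ)(r)` equals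
`N ⟨Ψ0(r,·), (Φ - S Ψ0)(r,·)⟩`, so Cauchy–Schwarz in the fibre over `r` gives
`|BΦ(r)|² / ρ0(r) ≤ N ∫ |Φ - S Ψ0|²(r,·)`. Integrating in `r` yields
`‖BΦ‖² ≤ N ‖Φ - S Ψ0‖² ≤ N ‖Φ‖²`, because `Φ - S Ψ0` is the component of `Φ` orthogonal to
the unit vector `Ψ0`.

No s-finiteness is assumed, so Tonelli is derived directly from
`μ.prod ν = μ.bind (fun x ↦ ν.map (Prod.mk x))` when this kernel is a.e.-measurable; when it is
not, the product measure is zero, which contradicts `‖Ψ0‖ = 1`.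
-/

open MeasureTheory ENNReal

theorem norm_sub_inner_smul_le_of_norm_eq_one {𝕜 E : Type*} [RCLike 𝕜] [NormedAddCommGroup E]
    [InnerProductSpace 𝕜 E] {x : E} (hx : ‖x‖ = 1) (y : E) :
    ‖y - inner 𝕜 x y • x‖ ≤ ‖y‖ := by
  have h : ‖y - inner 𝕜 x y • x‖ ^ 2 = ‖y‖ ^ 2 - ‖inner 𝕜 x y‖ ^ 2 := by
    rw [@norm_sub_sq 𝕜, inner_smul_right, ← inner_conj_symm, RCLike.conj_mul, norm_smul,
      RCLike.norm_conj, hx, ← RCLike.ofReal_pow, RCLike.ofReal_re]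
    ring
  nlinarith [norm_nonneg (y - inner 𝕜 x y • x), norm_nonneg y, sq_nonneg ‖inner 𝕜 x y‖]

theorem ENNReal.mul_sq_mul_inv_le {a b c n : ℝ≥0∞} (h : c ^ 2 ≤ a * b) :
    (n * c) ^ 2 * (n * a)⁻¹ ≤ n * b := by
  rcases eq_or_ne n 0 with rfl | hn
  · simp
  rcases eq_or_ne a 0 with rfl | ha
  · simp_all
  calc (n * c) ^ 2 * (n * a)⁻¹ ≤ n ^ 2 * (a * b) * (n⁻¹ * a⁻¹) := by
        rw [mul_pow, ENNReal.mul_inv (.inl hn) (.inr ha)]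
        gcongr
    _ = n * (n * n⁻¹) * (a * a⁻¹) * b := by ring
    _ ≤ n * 1 * 1 * b := by gcongr <;> exact ENNReal.mul_inv_le_one _
    _ = n * b := by ring

namespace MeasureTheory

variable {α 𝕜 : Type*} [MeasurableSpace α] {m : Measure α} [RCLike 𝕜]

theorem lintegral_enorm_sq_eq_eLpNorm_sq {E : Type*} [NormedAddCommGroup E] (f : α → E) :
    ∫⁻ x, ‖f x‖ₑ ^ 2 ∂m = eLpNorm f 2 m ^ 2 := by
  simpa using (eLpNorm_nnreal_pow_eq_lintegral (f := f) (μ := m) (p := 2) two_ne_zero).symm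

theorem MemLp.lintegral_enorm_sq_eq {E : Type*} [NormedAddCommGroup E] {f : α → E}
    (hf : MemLp f 2 m) : ∫⁻ x, ‖f x‖ₑ ^ 2 ∂m = ENNReal.ofReal (‖hf.toLp f‖ ^ 2) := by
  rw [Lp.norm_toLp, ENNReal.ofReal_pow ENNReal.toReal_nonneg, ofReal_toReal hf.2.ne,
    lintegral_enorm_sq_eq_eLpNorm_sq]

theorem MemLp.inner_toLp {f g : α → 𝕜} (hf : MemLp f 2 m) (hg : MemLp g 2 m) :
    inner 𝕜 (hf.toLp f) (hg.toLp g) = ∫ x, (starRingEnd 𝕜) (f x) * g x ∂m := by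
  rw [L2.inner_def]
  refine integral_congr_ae ?_
  filter_upwards [hf.coeFn_toLp, hg.coeFn_toLp] with x hfx hgx
  rw [RCLike.inner_apply, hfx, hgx, mul_comm]

theorem MemLp.integral_norm_sq_eq {f : α → 𝕜} (hf : MemLp f 2 m) :
    ∫ x, ‖f x‖ ^ 2 ∂m = ‖hf.toLp f‖ ^ 2 := by
  have h := hf.inner_toLp hf
  simp_rw [inner_self_eq_norm_sq_to_K, RCLike.conj_mul, ← RCLike.ofReal_pow, integral_ofReal]
    at h
  exact_mod_cast h.symm

theorem MemLp.integral_conj_mul_sub_mul {f g : α → 𝕜} (hf : MemLp f 2 m) (hg : MemLp g 2 m)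
    (c : 𝕜) :
    ∫ x, (starRingEnd 𝕜) (f x) * (g x - c * f x) ∂m
      = ∫ x, (starRingEnd 𝕜) (f x) * g x ∂m - c * ((∫ x, ‖f x‖ ^ 2 ∂m : ℝ) : 𝕜) := by
  have h := hf.inner_toLp (hg.sub (hf.const_smul c))
  rw [MemLp.toLp_sub hg (hf.const_smul c), MemLp.toLp_const_smul c hf, inner_sub_right,
    inner_smul_right, inner_self_eq_norm_sq_to_K, ← RCLike.ofReal_pow, hf.inner_toLp hg,
    ← hf.integral_norm_sq_eq] at h
  exact h.symm

theorem MemLp.enorm_integral_conj_mul_sq_le {f g : α → 𝕜} (hf : MemLp f 2 m)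
    (hg : MemLp g 2 m) :
    ‖∫ x, (starRingEnd 𝕜) (f x) * g x ∂m‖ₑ ^ 2
      ≤ (∫⁻ x, ‖f x‖ₑ ^ 2 ∂m) * ∫⁻ x, ‖g x‖ₑ ^ 2 ∂m := by
  rw [← hf.inner_toLp hg, hf.lintegral_enorm_sq_eq, hg.lintegral_enorm_sq_eq,
    ← ENNReal.ofReal_mul (by positivity), ← ofReal_norm,
    ← ENNReal.ofReal_pow (norm_nonneg _), ← mul_pow]
  gcongr
  exact norm_inner_le_norm _ _

theorem MemLp.lintegral_enorm_sub_mul_sq_le {f g : α → 𝕜} (hf : MemLp f 2 m)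
    (hg : MemLp g 2 m) (hf1 : ∫ x, ‖f x‖ ^ 2 ∂m = 1) :
    ∫⁻ x, ‖g x - (∫ a, (starRingEnd 𝕜) (f a) * g a ∂m) * f x‖ₑ ^ 2 ∂m
      ≤ ∫⁻ x, ‖g x‖ₑ ^ 2 ∂m := by
  have hF : ‖hf.toLp f‖ = 1 := by
    rw [← pow_eq_one_iff_of_nonneg (norm_nonneg _) two_ne_zero, ← hf.integral_norm_sq_eq, hf1]
  set c := inner 𝕜 (hf.toLp f) (hg.toLp g)
  have h := (hg.sub (hf.const_smul c)).lintegral_enorm_sq_eq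
  rw [MemLp.toLp_sub hg (hf.const_smul c), MemLp.toLp_const_smul c hf] at h
  rw [← hf.inner_toLp hg]
  calc ∫⁻ x, ‖g x - c * f x‖ₑ ^ 2 ∂m
      = ENNReal.ofReal (‖hg.toLp g - c • hf.toLp f‖ ^ 2) := h
    _ ≤ ENNReal.ofReal (‖hg.toLp g‖ ^ 2) := by
        gcongr
        exact norm_sub_inner_smul_le_of_norm_eq_one hF _
    _ = ∫⁻ x, ‖g x‖ₑ ^ 2 ∂m := hg.lintegral_enorm_sq_eq.symm

/-- With `f = Ψ0(r,·)` and `g = Φ(r,·)`, the left side is `|BΦ(r)|² / ρ0(r)`. -/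
theorem MemLp.enorm_sub_sq_mul_inv_le {f g : α → 𝕜} (hf : MemLp f 2 m) (hg : MemLp g 2 m)
    (c : 𝕜) (N : ℕ) :
    ‖(N : 𝕜) * (∫ x, (starRingEnd 𝕜) (f x) * g x ∂m)
          - c * ((N * ∫ x, ‖f x‖ ^ 2 ∂m : ℝ) : 𝕜)‖ₑ ^ 2
        * (ENNReal.ofReal (N * ∫ x, ‖f x‖ ^ 2 ∂m))⁻¹
      ≤ N * ∫⁻ x, ‖g x - c * f x‖ₑ ^ 2 ∂m := by
  have hsub : (N : 𝕜) * (∫ x, (starRingEnd 𝕜) (f x) * g x ∂m)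
        - c * ((N * ∫ x, ‖f x‖ ^ 2 ∂m : ℝ) : 𝕜)
      = N * ∫ x, (starRingEnd 𝕜) (f x) * (g x - c * f x) ∂m := by
    rw [hf.integral_conj_mul_sub_mul hg]
    push_cast
    ring
  have hN : ‖(N : 𝕜)‖ₑ = N := by
    rw [← ofReal_norm, RCLike.norm_natCast, ENNReal.ofReal_natCast]
  rw [hsub, enorm_mul, hN, ENNReal.ofReal_mul (Nat.cast_nonneg N), ENNReal.ofReal_natCast,
    hf.integral_norm_sq_eq, ← hf.lintegral_enorm_sq_eq]
  exact ENNReal.mul_sq_mul_inv_le (hf.enorm_integral_conj_mul_sq_le (hg.sub (hf.const_mul c)))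

variable {β : Type*} [MeasurableSpace β] {μ : Measure α} {ν : Measure β}

theorem Measure.prod_eq_zero_of_not_aemeasurable_map
    (hm : ¬ AEMeasurable (fun x => ν.map (Prod.mk x)) μ) : μ.prod ν = 0 := by
  rw [Measure.prod_def, Measure.bind, Measure.map_of_not_aemeasurable hm, Measure.join_zero]

theorem ae_ae_of_ae_prod_of_aemeasurable_map
    (hm : AEMeasurable (fun x => ν.map (Prod.mk x)) μ) {p : α × β → Prop}
    (h : ∀ᵐ z ∂μ.prod ν, p z) : ∀ᵐ x ∂μ, ∀ᵐ y ∂ν, p (x, y) := by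
  set s := toMeasurable (μ.prod ν) {z | ¬ p z}
  have hs : MeasurableSet s := measurableSet_toMeasurable _ _
  have hs0 : ∫⁻ x, ν.map (Prod.mk x) s ∂μ = 0 := by
    rw [← Measure.bind_apply hs hm, ← Measure.prod_def, measure_toMeasurable]
    exact h
  filter_upwards [(lintegral_eq_zero_iff' ((Measure.measurable_coe hs).comp_aemeasurable hm)).mp
    hs0] with x hx
  rw [Function.comp_apply, Pi.zero_apply, Measure.map_apply measurable_prodMk_left hs] at hx
  exact measure_eq_zero_iff_ae_notMem.mp hx |>.mono fun y hy ↦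
    not_not.mp fun hpy ↦ hy (subset_toMeasurable _ _ hpy)

theorem aemeasurable_lintegral_prodMk_left_of_aemeasurable_map
    (hm : AEMeasurable (fun x => ν.map (Prod.mk x)) μ) {f : α × β → ℝ≥0∞}
    (hf : AEMeasurable f (μ.prod ν)) : AEMeasurable (fun x => ∫⁻ y, f (x, y) ∂ν) μ := by
  obtain ⟨g, hg, hfg⟩ := hf
  refine ((Measure.measurable_lintegral hg).comp_aemeasurable hm).congr ?_
  filter_upwards [ae_ae_of_ae_prod_of_aemeasurable_map hm hfg] with x hx
  rw [Function.comp_apply, lintegral_map hg measurable_prodMk_left]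
  exact lintegral_congr_ae (hx.mono fun y hy => hy.symm)

theorem lintegral_prod_of_aemeasurable_map
    (hm : AEMeasurable (fun x => ν.map (Prod.mk x)) μ) {f : α × β → ℝ≥0∞}
    (hf : AEMeasurable f (μ.prod ν)) :
    ∫⁻ z, f z ∂μ.prod ν = ∫⁻ x, ∫⁻ y, f (x, y) ∂ν ∂μ := by
  obtain ⟨g, hg, hfg⟩ := hf
  calc ∫⁻ z, f z ∂μ.prod ν = ∫⁻ z, g z ∂μ.prod ν := lintegral_congr_ae hfg
    _ = ∫⁻ x, ∫⁻ y, g (x, y) ∂ν ∂μ := by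
      rw [Measure.prod_def, Measure.lintegral_bind hm hg.aemeasurable]
      exact lintegral_congr fun x => lintegral_map hg measurable_prodMk_left
    _ = ∫⁻ x, ∫⁻ y, f (x, y) ∂ν ∂μ := by
      refine lintegral_congr_ae ?_
      filter_upwards [ae_ae_of_ae_prod_of_aemeasurable_map hm hfg] with x hx
      exact lintegral_congr_ae (hx.mono fun y hy => hy.symm)

theorem MemLp.ae_memLp_prodMk_left_of_aemeasurable_map {E : Type*} [NormedAddCommGroup E]
    (hm : AEMeasurable (fun x => ν.map (Prod.mk x)) μ) {p : ℝ≥0∞} (hp0 : p ≠ 0) (hp : p ≠ ∞)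
    {f : α × β → E} (hf : MemLp f p (μ.prod ν)) :
    ∀ᵐ x ∂μ, MemLp (fun y => f (x, y)) p ν := by
  have hfp : AEMeasurable (fun z => ‖f z‖ₑ ^ p.toReal) (μ.prod ν) :=
    hf.1.enorm.pow_const _
  have hfin : ∫⁻ x, ∫⁻ y, ‖f (x, y)‖ₑ ^ p.toReal ∂ν ∂μ ≠ ∞ := by
    rw [← lintegral_prod_of_aemeasurable_map hm hfp]
    exact (lintegral_rpow_enorm_lt_top_of_eLpNorm_lt_top hp0 hp hf.2).ne
  obtain ⟨g, hg, hfg⟩ := hf.1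
  filter_upwards [ae_lt_top' (aemeasurable_lintegral_prodMk_left_of_aemeasurable_map hm hfp) hfin,
    ae_ae_of_ae_prod_of_aemeasurable_map hm hfg] with x hx hfgx
  refine ⟨(hg.comp_measurable measurable_prodMk_left).aestronglyMeasurable.congr
    (hfgx.mono fun y hy => hy.symm), ?_⟩
  exact (eLpNorm_lt_top_iff_lintegral_rpow_enorm_lt_top hp0 hp).mpr hx

end MeasureTheory

/-- The operator `B : 𝓗_N → L²_{1/ρ0}`,
`(BΦ)(r) = N ∫ conj Ψ0(r,·) Φ(r,·) − ⟨Ψ0, Φ⟩ ρ0(r)`, is bounded with operator norm at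
most `N`, expressed as `‖BΦ‖²_{L²_{1/ρ0}} ≤ N² ‖Φ‖²_{𝓗_N}`.  The `N`-body space is
modelled as `L²(Ω × T)` with `T` abstracting the last `N−1` coordinates, and the weight
`1/ρ0` (infinite off `supp ρ0`) is implemented by `(ENNReal.ofReal (ρ0 r))⁻¹`. -/
theorem stmt1
    {Ω T : Type*} [MeasurableSpace Ω] [MeasurableSpace T]
    (μ : Measure Ω) (ν : Measure T) (N : ℕ)
    (Ψ0 : Ω × T → ℂ) (hΨ0 : MemLp Ψ0 2 (μ.prod ν))
    (hΨ0norm : ∫ p, ‖Ψ0 p‖ ^ 2 ∂(μ.prod ν) = 1)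
    (ρ0 : Ω → ℝ)
    (hρ0 : ∀ᵐ r ∂μ, ρ0 r = N * ∫ y, ‖Ψ0 (r, y)‖ ^ 2 ∂ν)
    (Φ : Ω × T → ℂ) (hΦ : MemLp Φ 2 (μ.prod ν)) :
    ∫⁻ r, (‖(N : ℂ) * (∫ y, (starRingEnd ℂ) (Ψ0 (r, y)) * Φ (r, y) ∂ν)
            - (∫ p, (starRingEnd ℂ) (Ψ0 p) * Φ p ∂(μ.prod ν)) * (ρ0 r : ℂ)‖₊ : ℝ≥0∞) ^ 2
          * (ENNReal.ofReal (ρ0 r))⁻¹ ∂μ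
      ≤ (N : ℝ≥0∞) ^ 2 * ∫⁻ p, (‖Φ p‖₊ : ℝ≥0∞) ^ 2 ∂(μ.prod ν) := by
  by_cases hm : AEMeasurable (fun x => ν.map (Prod.mk x)) μ
  swap
  · simp [Measure.prod_eq_zero_of_not_aemeasurable_map hm] at hΨ0norm
  set S := ∫ p, (starRingEnd ℂ) (Ψ0 p) * Φ p ∂(μ.prod ν)
  have hslice : ∀ᵐ r ∂μ,
      ‖(N : ℂ) * (∫ y, (starRingEnd ℂ) (Ψ0 (r, y)) * Φ (r, y) ∂ν) - S * (ρ0 r : ℂ)‖ₑ ^ 2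
          * (ENNReal.ofReal (ρ0 r))⁻¹
        ≤ N * ∫⁻ y, ‖Φ (r, y) - S * Ψ0 (r, y)‖ₑ ^ 2 ∂ν := by
    filter_upwards [hρ0, hΨ0.ae_memLp_prodMk_left_of_aemeasurable_map hm two_ne_zero ofNat_ne_top,
      hΦ.ae_memLp_prodMk_left_of_aemeasurable_map hm two_ne_zero ofNat_ne_top] with r hρ hΨr hΦr
    rw [hρ]
    exact hΨr.enorm_sub_sq_mul_inv_le hΦr S N
  calc _ ≤ ∫⁻ r, N * ∫⁻ y, ‖Φ (r, y) - S * Ψ0 (r, y)‖ₑ ^ 2 ∂ν ∂μ := lintegral_mono_ae hslice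
    _ = N * ∫⁻ p, ‖Φ p - S * Ψ0 p‖ₑ ^ 2 ∂(μ.prod ν) := by
      rw [lintegral_const_mul' _ _ (natCast_ne_top N), lintegral_prod_of_aemeasurable_map hm
        (f := fun p => ‖Φ p - S * Ψ0 p‖ₑ ^ 2) ((hΦ.sub (hΨ0.const_mul S)).1.enorm.pow_const 2)]
    _ ≤ N * ∫⁻ p, ‖Φ p‖ₑ ^ 2 ∂(μ.prod ν) := by
      gcongr N * ?_
      exact hΨ0.lintegral_enorm_sub_mul_sq_le hΦ hΨ0norm
    _ ≤ N ^ 2 * ∫⁻ p, ‖Φ p‖ₑ ^ 2 ∂(μ.prod ν) := by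
      gcongr
      exact_mod_cast Nat.le_self_pow two_ne_zero N
end

section
/- Let $\omega_1 = \inf\sigma(H_\#) > 0$ and let $K$ be bounded symmetric. Consider the self-adjoint operators $\mathcal{M} = H_\# + 2K$ and $\mathcal{C}$ with $q_{\mathcal{C}}(\Psi,\Psi) = q_{\mathcal{M}}(H_\#^{1/2}\Psi, H_\#^{1/2}\Psi)$. If $\mathcal{M} \ge \delta > 0$ then $\mathcal{C} \ge \delta\omega_1$; and if $\mathcal{C} \ge \delta > 0$ then $\mathcal{M} \ge \sqrt{\|K\|^2 + \delta} - \|K\|$. -/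
open MeasureTheory Complex ENNReal

theorem part1 {X : Type*} [MeasurableSpace X] (ν : Measure X)
    (h : X → ℝ) (hmeas : Measurable h) (ω1 : ℝ) (hω1 : 0 < ω1)
    (hlb : ∀ᵐ x ∂ν, ω1 ≤ h x)
    (K : Lp ℂ 2 ν →L[ℂ] Lp ℂ 2 ν)
    (δ : ℝ) (hδ : 0 < δ)
    (hM : ∀ (Ψ : X → ℂ) (hΨ : MemLp Ψ 2 ν),
        MemLp (fun x => Real.sqrt (h x) • Ψ x) 2 ν →
        δ * ∫ x, ‖Ψ x‖ ^ 2 ∂ν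
          ≤ (∫ x, h x * ‖Ψ x‖ ^ 2 ∂ν) + 2 * (@inner ℂ _ _ (hΨ.toLp _) (K (hΨ.toLp _))).re) :
      ∀ (Φ : X → ℂ) (hΦ : MemLp Φ 2 ν),
        MemLp (fun x => h x • Φ x) 2 ν →
        ∀ hsq : MemLp (fun x => Real.sqrt (h x) • Φ x) 2 ν,
        δ * ω1 * ∫ x, ‖Φ x‖ ^ 2 ∂ν
          ≤ (∫ x, ‖h x • Φ x‖ ^ 2 ∂ν)
            + 2 * (@inner ℂ _ _ (hsq.toLp _) (K (hsq.toLp _))).re := by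
  intro Φ hΦ hhΦ hsq
  have hpos : ∀ᵐ x ∂ν, 0 ≤ h x := by filter_upwards [hlb] with x hx; linarith
  have heq : (fun x => h x • Φ x) =ᵐ[ν]
      (fun x => Real.sqrt (h x) • (Real.sqrt (h x) • Φ x)) := by
    filter_upwards [hpos] with x hx
    rw [smul_smul, Real.mul_self_sqrt hx]
  have hmem : MemLp (fun x => Real.sqrt (h x) • (Real.sqrt (h x) • Φ x)) 2 ν :=
    hhΦ.ae_eq heq
  have key := hM (fun x => Real.sqrt (h x) • Φ x) hsq hmem
  -- integrand identities
  have hnorm : ∀ᵐ x ∂ν, ‖Real.sqrt (h x) • Φ x‖ ^ 2 = h x * ‖Φ x‖ ^ 2 := by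
    filter_upwards [hpos] with x hx
    rw [norm_smul, mul_pow, Real.norm_eq_abs, _root_.abs_of_nonneg (Real.sqrt_nonneg _),
      Real.sq_sqrt hx]
  have hint : Integrable (fun x => h x * ‖Φ x‖ ^ 2) ν :=
    (hsq.norm.integrable_sq).congr hnorm
  have e1 : ∫ x, ‖Real.sqrt (h x) • Φ x‖ ^ 2 ∂ν = ∫ x, h x * ‖Φ x‖ ^ 2 ∂ν :=
    integral_congr_ae hnorm
  have e2 : ∫ x, h x * ‖Real.sqrt (h x) • Φ x‖ ^ 2 ∂ν = ∫ x, ‖h x • Φ x‖ ^ 2 ∂ν := by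
    refine integral_congr_ae ?_
    filter_upwards [hnorm] with x hx
    rw [hx, norm_smul, mul_pow, Real.norm_eq_abs, _root_.sq_abs]; ring
  have e3 : δ * ω1 * ∫ x, ‖Φ x‖ ^ 2 ∂ν ≤ δ * ∫ x, h x * ‖Φ x‖ ^ 2 ∂ν := by
    have : ω1 * ∫ x, ‖Φ x‖ ^ 2 ∂ν ≤ ∫ x, h x * ‖Φ x‖ ^ 2 ∂ν := by
      rw [← integral_const_mul]
      refine integral_mono_ae ((hΦ.norm.integrable_sq).const_mul ω1) hint ?_
      filter_upwards [hlb] with x hx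
      exact mul_le_mul_of_nonneg_right hx (sq_nonneg _)
    calc δ * ω1 * ∫ x, ‖Φ x‖ ^ 2 ∂ν = δ * (ω1 * ∫ x, ‖Φ x‖ ^ 2 ∂ν) := by ring
    _ ≤ δ * ∫ x, h x * ‖Φ x‖ ^ 2 ∂ν := mul_le_mul_of_nonneg_left this hδ.le
  beta_reduce at key
  rw [e1, e2] at key
  linarith [key, e3]



section helpers
variable {X : Type*} [MeasurableSpace X] {ν : Measure X}

lemma normsq_toLp {f : X → ℂ} (hf : MemLp f 2 ν) :
    ‖hf.toLp f‖ ^ 2 = ∫ x, ‖f x‖ ^ 2 ∂ν := by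
  have h1 := inner_self_eq_norm_sq (𝕜 := ℂ) (hf.toLp f)
  rw [L2.inner_def] at h1
  rw [← h1, ← integral_re (L2.integrable_inner _ _)]
  refine integral_congr_ae ?_
  filter_upwards [hf.coeFn_toLp] with x hx
  rw [hx]
  exact inner_self_eq_norm_sq (𝕜 := ℂ) (f x)

lemma inner_K_lb (K : Lp ℂ 2 ν →L[ℂ] Lp ℂ 2 ν) (f : Lp ℂ 2 ν) :
    -(‖K‖ * ‖f‖ ^ 2) ≤ (@inner ℂ _ _ f (K f)).re := by
  have h1 : ‖(@inner ℂ _ _ f (K f))‖ ≤ ‖K‖ * ‖f‖ ^ 2 := by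
    calc ‖(@inner ℂ _ _ f (K f))‖ ≤ ‖f‖ * ‖K f‖ := norm_inner_le_norm _ _
    _ ≤ ‖f‖ * (‖K‖ * ‖f‖) := mul_le_mul_of_nonneg_left (K.le_opNorm f) (norm_nonneg _)
    _ = ‖K‖ * ‖f‖ ^ 2 := by ring
  have h2 := neg_abs_le (@inner ℂ _ _ f (K f)).re
  have h3 : |(@inner ℂ _ _ f (K f)).re| ≤ ‖(@inner ℂ _ _ f (K f))‖ := Complex.abs_re_le_norm _
  linarith
end helpers

-- algebraic core: with a ≥ 0, δ > 0, m = √(a²+δ) − a, s = m/(2(m+a)), t = 1−s: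
-- for any H > 0:  t*δ*H⁻¹ + s*H ≥ m + 2*a*s
lemma alg_core (a δ : ℝ) (ha : 0 ≤ a) (hδ : 0 < δ) (H : ℝ) (hH : 0 < H) :
    let m := Real.sqrt (a ^ 2 + δ) - a
    let s := m / (2 * (m + a))
    m + 2 * a * s ≤ (1 - s) * δ * H⁻¹ + s * H := by
  intro m s
  have hsq : (m + a) ^ 2 = a ^ 2 + δ := by
    have : m + a = Real.sqrt (a ^ 2 + δ) := by simp [m]
    rw [this, Real.sq_sqrt (by positivity)]
  have hm : 0 < m := by
    have : a < Real.sqrt (a ^ 2 + δ) :=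
      (Real.lt_sqrt (by positivity)).mpr (by linarith)
    simp only [m]; linarith
  have hma : 0 < m + a := by linarith
  have hδm : δ = m * (m + 2 * a) := by nlinarith [hsq]
  have hs : 0 < s := by positivity
  have hs1 : s < 1 := by
    rw [div_lt_one (by positivity)]; linarith
  have ht : 0 < 1 - s := by linarith
  -- key identity: (m + 2*a*s)^2 = 4 * ((1-s)*δ) * s
  have hkey : (m + 2 * a * s) ^ 2 = 4 * ((1 - s) * δ) * s := by
    have hma' : (2 * (m + a)) ≠ 0 := by positivity
    simp only [s]
    field_simp
    rw [hδm]; ring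
  -- AM-GM
  set A := (1 - s) * δ * H⁻¹ with hA
  set B := s * H with hB
  have hApos : 0 < A := by positivity
  have hBpos : 0 < B := by positivity
  have hAB : A * B = (1 - s) * δ * s := by
    rw [hA, hB, show (1 - s) * δ * H⁻¹ * (s * H) = (1 - s) * δ * s * (H * H⁻¹) by ring,
      mul_inv_cancel₀ hH.ne', mul_one]
  have hc : 0 ≤ m + 2 * a * s := by positivity
  nlinarith [sq_nonneg (A - B), sq_nonneg (A + B - (m + 2 * a * s)), hkey, hAB]


theorem part2 {X : Type*} [MeasurableSpace X] (ν : Measure X)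
    (h : X → ℝ) (hmeas : Measurable h) (ω1 : ℝ) (hω1 : 0 < ω1)
    (hlb : ∀ᵐ x ∂ν, ω1 ≤ h x)
    (K : Lp ℂ 2 ν →L[ℂ] Lp ℂ 2 ν)
    (δ : ℝ) (hδ : 0 < δ)
    (hC : ∀ (Φ : X → ℂ) (hΦ : MemLp Φ 2 ν),
        MemLp (fun x => h x • Φ x) 2 ν →
        ∀ hsq : MemLp (fun x => Real.sqrt (h x) • Φ x) 2 ν,
        δ * ∫ x, ‖Φ x‖ ^ 2 ∂ν
          ≤ (∫ x, ‖h x • Φ x‖ ^ 2 ∂ν)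
            + 2 * (@inner ℂ _ _ (hsq.toLp _) (K (hsq.toLp _))).re) :
      ∀ (Ψ : X → ℂ) (hΨ : MemLp Ψ 2 ν),
        MemLp (fun x => Real.sqrt (h x) • Ψ x) 2 ν →
        (Real.sqrt (‖K‖ ^ 2 + δ) - ‖K‖) * ∫ x, ‖Ψ x‖ ^ 2 ∂ν
          ≤ (∫ x, h x * ‖Ψ x‖ ^ 2 ∂ν)
            + 2 * (@inner ℂ _ _ (hΨ.toLp _) (K (hΨ.toLp _))).re := by
  intro Ψ hΨ hsqΨ
  have hpos : ∀ᵐ x ∂ν, 0 < h x := by filter_upwards [hlb] with x hx; linarith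
  set Φ : X → ℂ := fun x => ((Real.sqrt (h x))⁻¹ : ℝ) • Ψ x with hΦdef
  -- measurability of Φ
  have hΦm : AEStronglyMeasurable Φ ν := by
    exact ((Real.continuous_sqrt.measurable.comp hmeas).inv.aemeasurable.aestronglyMeasurable.smul
      hΨ.aestronglyMeasurable)
  -- Φ ∈ L²
  have hΦmem : MemLp Φ 2 ν := by
    refine MemLp.of_le (hΨ.const_smul ((Real.sqrt ω1)⁻¹ : ℝ)) hΦm ?_
    filter_upwards [hlb] with x hx
    simp only [hΦdef, Pi.smul_apply, norm_smul, Real.norm_eq_abs, abs_inv,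
      _root_.abs_of_nonneg (Real.sqrt_nonneg _)]
    exact mul_le_mul_of_nonneg_right
      (inv_anti₀ (Real.sqrt_pos.mpr hω1) (Real.sqrt_le_sqrt hx)) (norm_nonneg _)
  -- h • Φ = √h • Ψ  a.e.
  have heq1 : (fun x => Real.sqrt (h x) • Ψ x) =ᵐ[ν] (fun x => h x • Φ x) := by
    filter_upwards [hpos] with x hx
    simp only [hΦdef, smul_smul]
    congr 1
    have hs0 : Real.sqrt (h x) ≠ 0 := by positivity
    field_simp
    exact Real.sq_sqrt hx.le
  have hhΦ : MemLp (fun x => h x • Φ x) 2 ν := hsqΨ.ae_eq heq1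
  -- √h • Φ = Ψ  a.e.
  have heq2 : (fun x => Real.sqrt (h x) • Φ x) =ᵐ[ν] Ψ := by
    filter_upwards [hpos] with x hx
    simp only [hΦdef, smul_smul]
    rw [mul_inv_cancel₀ (by positivity), one_smul]
  have hsqΦ : MemLp (fun x => Real.sqrt (h x) • Φ x) 2 ν := hΨ.ae_eq heq2.symm
  have key := hC Φ hΦmem hhΦ hsqΦ
  -- rewrite the inner term
  have hLp : hsqΦ.toLp _ = hΨ.toLp _ := MemLp.toLp_congr _ _ heq2
  rw [hLp] at key
  set T : ℝ := 2 * (@inner ℂ _ _ (hΨ.toLp Ψ) (K (hΨ.toLp Ψ))).re with hT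
  -- integrand identities
  have hnormΨ : ∀ᵐ x ∂ν, ‖Real.sqrt (h x) • Ψ x‖ ^ 2 = h x * ‖Ψ x‖ ^ 2 := by
    filter_upwards [hpos] with x hx
    rw [norm_smul, mul_pow, Real.norm_eq_abs, _root_.abs_of_nonneg (Real.sqrt_nonneg _),
      Real.sq_sqrt hx.le]
  have Ih_int : Integrable (fun x => h x * ‖Ψ x‖ ^ 2) ν :=
    (hsqΨ.norm.integrable_sq).congr hnormΨ
  have I0_int : Integrable (fun x => ‖Ψ x‖ ^ 2) ν := hΨ.norm.integrable_sq
  have I1_int : Integrable (fun x => (h x)⁻¹ * ‖Ψ x‖ ^ 2) ν := by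
    refine Integrable.mono (I0_int.const_mul ω1⁻¹)
      ((hmeas.inv.aemeasurable.aestronglyMeasurable).mul I0_int.aestronglyMeasurable) ?_
    filter_upwards [hpos, hlb] with x hx hx2
    rw [Real.norm_eq_abs, Real.norm_eq_abs, _root_.abs_of_nonneg (by positivity),
      _root_.abs_of_nonneg (by positivity)]
    exact mul_le_mul_of_nonneg_right (inv_anti₀ hω1 hx2) (sq_nonneg _)
  have e1 : ∫ x, ‖Φ x‖ ^ 2 ∂ν = ∫ x, (h x)⁻¹ * ‖Ψ x‖ ^ 2 ∂ν := by
    refine integral_congr_ae ?_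
    filter_upwards [hpos] with x hx
    simp only [hΦdef, norm_smul, Real.norm_eq_abs, mul_pow,
      _root_.abs_of_nonneg (by positivity : (0:ℝ) ≤ (Real.sqrt (h x))⁻¹)]
    rw [← Real.sqrt_inv, Real.sq_sqrt (by positivity)]
  have e2 : ∫ x, ‖h x • Φ x‖ ^ 2 ∂ν = ∫ x, h x * ‖Ψ x‖ ^ 2 ∂ν := by
    refine integral_congr_ae ?_
    filter_upwards [heq1, hnormΨ] with x hx1 hx2
    rw [← hx1, hx2]
  rw [e1, e2] at key
  -- key : δ * I1 ≤ Ih + T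
  set I0 := ∫ x, ‖Ψ x‖ ^ 2 ∂ν with hI0
  set I1 := ∫ x, (h x)⁻¹ * ‖Ψ x‖ ^ 2 ∂ν with hI1
  set Ih := ∫ x, h x * ‖Ψ x‖ ^ 2 ∂ν with hIh
  -- lower bound on T
  have hTlb : -(2 * ‖K‖ * I0) ≤ T := by
    have := inner_K_lb K (hΨ.toLp Ψ)
    rw [normsq_toLp hΨ] at this
    simp only [hT]; linarith
  -- set up constants
  set a := ‖K‖ with ha
  have ha0 : (0:ℝ) ≤ a := norm_nonneg _
  set m := Real.sqrt (a ^ 2 + δ) - a with hm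
  set s := m / (2 * (m + a)) with hsdef
  have hmpos : 0 < m := by
    have : a < Real.sqrt (a ^ 2 + δ) := (Real.lt_sqrt (by positivity)).mpr (by linarith)
    simp only [hm]; linarith
  have hs : 0 < s := by positivity
  have hs1 : s < 1 := by rw [hsdef, div_lt_one (by positivity)]; linarith
  -- pointwise bound integrated
  have hmain : (m + 2 * a * s) * I0 ≤ (1 - s) * δ * I1 + s * Ih := by
    have hint : Integrable (fun x => (1 - s) * δ * ((h x)⁻¹ * ‖Ψ x‖ ^ 2)
        + s * (h x * ‖Ψ x‖ ^ 2)) ν :=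
      (I1_int.const_mul _).add (Ih_int.const_mul _)
    have hmono : (m + 2 * a * s) * I0 ≤ ∫ x, ((1 - s) * δ * ((h x)⁻¹ * ‖Ψ x‖ ^ 2)
        + s * (h x * ‖Ψ x‖ ^ 2)) ∂ν := by
      rw [hI0, ← integral_const_mul]
      refine integral_mono_ae (I0_int.const_mul _) hint ?_
      filter_upwards [hpos] with x hx
      have hcore := alg_core a δ ha0 hδ (h x) hx
      simp only at hcore
      have : (m + 2 * a * s) ≤ (1 - s) * δ * (h x)⁻¹ + s * h x := hcore
      nlinarith [sq_nonneg ‖Ψ x‖, this, sq_nonneg (‖Ψ x‖)]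
    calc (m + 2 * a * s) * I0 ≤ _ := hmono
    _ = (1 - s) * δ * I1 + s * Ih := by
        rw [integral_add (I1_int.const_mul _) (Ih_int.const_mul _),
          integral_const_mul, integral_const_mul]
  -- combine
  have h1 : (1 - s) * (δ * I1) ≤ (1 - s) * (Ih + T) :=
    mul_le_mul_of_nonneg_left key (by linarith)
  have h2 : s * (Ih - 2 * a * I0) ≤ s * (Ih + T) := by
    refine mul_le_mul_of_nonneg_left ?_ hs.le
    linarith [hTlb]
  have hgoal : m * I0 ≤ Ih + T := by nlinarith [hmain, h1, h2]
  exact hgoal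


/-- **quantitative stability.**  `H_#` is self-adjoint with
`ω₁ = inf σ(H_#) > 0`, realized via the spectral theorem as multiplication by `h ≥ ω₁`
on `L²(X, ν)`; `K` is bounded symmetric.  `𝓜 = H_# + 2K` has quadratic form
`q_𝓜(Ψ,Ψ) = ∫ h|Ψ|² + 2⟨Ψ, KΨ⟩` with form domain `𝓗¹(H_#)`, and the Casida operator
`𝒞` has quadratic form `q_𝒞(Φ,Φ) = ∫ h²|Φ|² + 2⟨H_#^{1/2}Φ, K H_#^{1/2}Φ⟩
= q_𝓜(H_#^{1/2}Φ, H_#^{1/2}Φ)` with form domain `D(H_#)`.  Then: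
`𝓜 ≥ δ > 0` implies `𝒞 ≥ δω₁`, and `𝒞 ≥ δ > 0` implies
`𝓜 ≥ √(‖K‖² + δ) − ‖K‖` (semi-boundedness being expressed by the form inequalities). -/
theorem stmt7 {X : Type*} [MeasurableSpace X] (ν : Measure X)
    (h : X → ℝ) (hmeas : Measurable h) (ω1 : ℝ) (hω1 : 0 < ω1)
    (hlb : ∀ᵐ x ∂ν, ω1 ≤ h x)
    (K : Lp ℂ 2 ν →L[ℂ] Lp ℂ 2 ν) (hK : IsSelfAdjoint K)
    (δ : ℝ) (hδ : 0 < δ) :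
    ((∀ (Ψ : X → ℂ) (hΨ : MemLp Ψ 2 ν),
        MemLp (fun x => Real.sqrt (h x) • Ψ x) 2 ν →
        δ * ∫ x, ‖Ψ x‖ ^ 2 ∂ν
          ≤ (∫ x, h x * ‖Ψ x‖ ^ 2 ∂ν) + 2 * (@inner ℂ _ _ (hΨ.toLp _) (K (hΨ.toLp _))).re) →
      ∀ (Φ : X → ℂ) (hΦ : MemLp Φ 2 ν),
        MemLp (fun x => h x • Φ x) 2 ν →
        ∀ hsq : MemLp (fun x => Real.sqrt (h x) • Φ x) 2 ν,
        δ * ω1 * ∫ x, ‖Φ x‖ ^ 2 ∂ν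
          ≤ (∫ x, ‖h x • Φ x‖ ^ 2 ∂ν)
            + 2 * (@inner ℂ _ _ (hsq.toLp _) (K (hsq.toLp _))).re) ∧
    ((∀ (Φ : X → ℂ) (hΦ : MemLp Φ 2 ν),
        MemLp (fun x => h x • Φ x) 2 ν →
        ∀ hsq : MemLp (fun x => Real.sqrt (h x) • Φ x) 2 ν,
        δ * ∫ x, ‖Φ x‖ ^ 2 ∂ν
          ≤ (∫ x, ‖h x • Φ x‖ ^ 2 ∂ν)
            + 2 * (@inner ℂ _ _ (hsq.toLp _) (K (hsq.toLp _))).re) →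
      ∀ (Ψ : X → ℂ) (hΨ : MemLp Ψ 2 ν),
        MemLp (fun x => Real.sqrt (h x) • Ψ x) 2 ν →
        (Real.sqrt (‖K‖ ^ 2 + δ) - ‖K‖) * ∫ x, ‖Ψ x‖ ^ 2 ∂ν
          ≤ (∫ x, h x * ‖Ψ x‖ ^ 2 ∂ν)
            + 2 * (@inner ℂ _ _ (hΨ.toLp _) (K (hΨ.toLp _))).re) := by
  exact ⟨fun hM => part1 ν h hmeas ω1 hω1 hlb K δ hδ hM,
    fun hC => part2 ν h hmeas ω1 hω1 hlb K δ hδ hC⟩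
end

section
/- Let $\chi_0 : \mathbb{R}_+ \to \mathcal{B}(X,Y)$ be strongly continuous and uniformly bounded, and $F \in \mathcal{B}(Y,X)$. The solution map $\mathcal{S}_F : \chi_0 \mapsto \chi_F$, where $\chi_F$ is the unique strongly continuous solution of $\chi_F(t) = \chi_0(t) + \int_0^t \chi_0(t-s)F\chi_F(s)ds$, is a bijection on the space of strongly continuous uniformly-bounded-on-compacts $\mathcal{B}(X,Y)$-valued functions on $\mathbb{R}_+$, with inverse given by the solution map $\mathcal{S}_{-F}$ of the Volterra equation with kernel $-F$. -/
open MeasureTheory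

/-- Membership in the solution space: strongly continuous on `ℝ₊` and uniformly bounded
(in operator norm) on compact subsets of `ℝ₊`. -/
def DysonGood {X Y : Type*} [NormedAddCommGroup X] [NormedSpace ℂ X]
    [NormedAddCommGroup Y] [NormedSpace ℂ Y] (χ : ℝ → X →L[ℂ] Y) : Prop :=
  (∀ x : X, ContinuousOn (fun t => χ t x) (Set.Ici 0)) ∧
    ∀ T : ℝ, ∃ C : ℝ, ∀ t ∈ Set.Icc (0 : ℝ) T, ‖χ t‖ ≤ C

/-- `χF` solves the Dyson (Volterra) equation with data `χ0` and kernel operator `F`. -/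
def DysonSol {X Y : Type*} [NormedAddCommGroup X] [NormedSpace ℂ X]
    [NormedAddCommGroup Y] [NormedSpace ℂ Y] [CompleteSpace Y]
    (F : Y →L[ℂ] X) (χ0 χF : ℝ → X →L[ℂ] Y) : Prop :=
  ∀ t : ℝ, 0 ≤ t → ∀ x : X,
    χF t x = χ0 t x + ∫ s in (0 : ℝ)..t, χ0 (t - s) (F (χF s x))

/-!
For fixed `x`, the Dyson equation is a linear Volterra equation `u = χ0(·) x + K ⋆ u` whose
kernel `K t = χ0 t ∘ F` is strongly continuous and locally bounded. On `[0, T]` it is solved by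
Banach's fixed point theorem, because the `n`-th iterate of the Picard map is Lipschitz with
constant `(C T) ^ n / n!`; the integral Grönwall inequality gives uniqueness and the bound
`‖u t‖ ≤ C ‖x‖ exp (C ‖F‖ t)`, so the solutions glue in `T` and are linear and bounded in `x`,
i.e. they form operators `χF t`.

For the inverse relation, `χ0 ⋆ F χF` and `χF ⋆ F χ0` both solve `P = χ0 ⋆ F χ0 + χ0 ⋆ F P`
(the second by associativity of the convolution, which is Fubini on a triangle), so they
coincide, and that identity is the equation `χ0 = χF - χF ⋆ F χ0`.

Families given on `t ≥ 0` are extended to `t < 0` by their value at `0`, so that all continuity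
arguments take place on `ℝ`.
-/

open Set Filter Topology

section Convolution

variable {E G H : Type*} [NormedAddCommGroup E] [NormedSpace ℂ E]
  [NormedAddCommGroup G] [NormedSpace ℂ G] [NormedAddCommGroup H] [NormedSpace ℂ H]

structure StronglyContinuousLocallyBounded (A : ℝ → E →L[ℂ] G) : Prop where
  continuous_apply : ∀ x, Continuous fun t => A t x
  exists_bound : ∀ S : Set ℝ, IsCompact S → ∃ C, ∀ t ∈ S, ‖A t‖ ≤ C

namespace StronglyContinuousLocallyBounded

variable {A : ℝ → E →L[ℂ] G}

theorem exists_nonneg_bound (hA : StronglyContinuousLocallyBounded A) {S : Set ℝ}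
    (hS : IsCompact S) : ∃ C, 0 ≤ C ∧ ∀ t ∈ S, ‖A t‖ ≤ C := by
  obtain ⟨C, hC⟩ := hA.exists_bound S hS
  exact ⟨max C 0, le_max_right C 0, fun t ht => (hC t ht).trans (le_max_left C 0)⟩

theorem comp_right (hA : StronglyContinuousLocallyBounded A) (F : H →L[ℂ] E) :
    StronglyContinuousLocallyBounded fun t => (A t).comp F where
  continuous_apply y := hA.continuous_apply (F y)
  exists_bound S hS := by
    obtain ⟨C, hC⟩ := hA.exists_bound S hS
    exact ⟨C * ‖F‖, fun t ht =>
      ((A t).opNorm_comp_le F).trans (by gcongr; exact hC t ht)⟩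

theorem continuous_comp (hA : StronglyContinuousLocallyBounded A) {P : Type*}
    [TopologicalSpace P] {f : P → ℝ} {w : P → E} (hf : Continuous f) (hw : Continuous w) :
    Continuous fun p => A (f p) (w p) := by
  refine continuous_iff_continuousAt.2 fun p₀ => ?_
  obtain ⟨C, hC⟩ := hA.exists_bound _ (isCompact_Icc (a := f p₀ - 1) (b := f p₀ + 1))
  have hnear : ∀ᶠ p in 𝓝 p₀, f p ∈ Icc (f p₀ - 1) (f p₀ + 1) :=
    hf.continuousAt (Icc_mem_nhds (by linarith) (by linarith))
  have hsmall : Tendsto (fun p => A (f p) (w p - w p₀)) (𝓝 p₀) (𝓝 0) := by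
    refine squeeze_zero_norm' (hnear.mono fun p hp => (A (f p)).le_of_opNorm_le (hC _ hp) _) ?_
    simpa using ((hw.tendsto p₀).sub_const (w p₀)).norm.const_mul C
  have hfixed : Tendsto (fun p => A (f p) (w p₀)) (𝓝 p₀) (𝓝 (A (f p₀) (w p₀))) :=
    ((hA.continuous_apply (w p₀)).comp hf).continuousAt
  simpa [ContinuousAt] using hsmall.add hfixed

end StronglyContinuousLocallyBounded

noncomputable def volterraConv (A : ℝ → E →L[ℂ] G) (w : ℝ → E) (t : ℝ) : G :=
  ∫ s in (0 : ℝ)..t, A (t - s) (w s)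

section VolterraConv

variable {A : ℝ → E →L[ℂ] G} {v w : ℝ → E}

theorem StronglyContinuousLocallyBounded.intervalIntegrable_apply_sub
    (hA : StronglyContinuousLocallyBounded A) (hw : Continuous w) (t a b : ℝ) :
    IntervalIntegrable (fun s => A (t - s) (w s)) volume a b :=
  (hA.continuous_comp (by fun_prop) hw).intervalIntegrable a b

theorem StronglyContinuousLocallyBounded.continuous_volterraConv
    (hA : StronglyContinuousLocallyBounded A) (hw : Continuous w) :
    Continuous (volterraConv A w) :=
  intervalIntegral.continuous_parametric_intervalIntegral_of_continuous
    (hA.continuous_comp (by fun_prop) (hw.comp continuous_snd)) continuous_id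

theorem volterraConv_congr {A' : ℝ → E →L[ℂ] G} {t : ℝ} (ht : 0 ≤ t)
    (hA : EqOn A A' (Icc 0 t)) (hw : EqOn w v (Icc 0 t)) :
    volterraConv A w t = volterraConv A' v t := by
  refine intervalIntegral.integral_congr fun s hs => ?_
  rw [uIcc_of_le ht] at hs
  simp only [hA ⟨sub_nonneg.2 hs.2, by linarith [hs.1]⟩, hw hs]

theorem volterraConv_add (hA : StronglyContinuousLocallyBounded A) (hv : Continuous v)
    (hw : Continuous w) : volterraConv A (v + w) = volterraConv A v + volterraConv A w := by
  funext t
  simp only [volterraConv, Pi.add_apply, map_add]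
  exact intervalIntegral.integral_add (hA.intervalIntegrable_apply_sub hv t 0 t)
    (hA.intervalIntegrable_apply_sub hw t 0 t)

theorem volterraConv_sub (hA : StronglyContinuousLocallyBounded A) (hv : Continuous v)
    (hw : Continuous w) : volterraConv A (v - w) = volterraConv A v - volterraConv A w := by
  funext t
  simp only [volterraConv, Pi.sub_apply, map_sub]
  exact intervalIntegral.integral_sub (hA.intervalIntegrable_apply_sub hv t 0 t)
    (hA.intervalIntegrable_apply_sub hw t 0 t)

theorem volterraConv_smul (c : ℂ) : volterraConv A (c • w) = c • volterraConv A w := by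
  funext t
  simp only [volterraConv, Pi.smul_apply, map_smul]
  exact intervalIntegral.integral_smul c _

theorem norm_volterraConv_le {C t : ℝ} (ht : 0 ≤ t) (hC : ∀ s ∈ Icc 0 t, ‖A s‖ ≤ C)
    (hw : Continuous w) : ‖volterraConv A w t‖ ≤ C * ∫ s in (0 : ℝ)..t, ‖w s‖ := by
  rw [← intervalIntegral.integral_const_mul]
  refine intervalIntegral.norm_integral_le_of_norm_le ht (ae_of_all _ fun s hs => ?_)
    ((hw.norm.intervalIntegrable 0 t).const_mul C)
  exact (A (t - s)).le_of_opNorm_le (hC _ ⟨by linarith [hs.2], by linarith [hs.1]⟩) _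

end VolterraConv

theorem intervalIntegral_integral_swap_triangle {V : Type*} [NormedAddCommGroup V]
    [NormedSpace ℝ V] {k : ℝ × ℝ → V} (hk : Continuous k) {t : ℝ} (ht : 0 ≤ t) :
    ∫ s in (0 : ℝ)..t, ∫ u in s..t, k (u, s) =
      ∫ u in (0 : ℝ)..t, ∫ s in (0 : ℝ)..u, k (u, s) := by
  set μ := volume.restrict (Ioc (0 : ℝ) t)
  set k' := {p : ℝ × ℝ | p.2 < p.1}.indicator k
  have hint : Integrable (Function.uncurry fun u s => k' (u, s)) (μ.prod μ) := by
    rw [Measure.prod_restrict, ← Measure.volume_eq_prod]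
    refine IntegrableOn.indicator ?_ (measurableSet_lt measurable_snd measurable_fst)
    exact (hk.continuousOn.integrableOn_compact (isCompact_Icc.prod isCompact_Icc)).mono_set
      (prod_mono Ioc_subset_Icc_self Ioc_subset_Icc_self)
  have inner_s : ∀ u ∈ Ioc 0 t, ∫ s, k' (u, s) ∂μ = ∫ s in (0 : ℝ)..u, k (u, s) := by
    intro u hu
    have : (fun s => k' (u, s)) = (Iio u).indicator fun s => k (u, s) := by
      ext s; by_cases hs : s < u <;> simp [k', hs]
    have hset : Ioc 0 t ∩ Iio u = Ioo 0 u := by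
      ext r; simp only [mem_inter_iff, mem_Ioc, mem_Iio, mem_Ioo]; grind
    rw [this, setIntegral_indicator measurableSet_Iio, hset, ← integral_Ioc_eq_integral_Ioo,
      intervalIntegral.integral_of_le hu.1.le]
  have inner_u : ∀ s ∈ Ioc 0 t, ∫ u, k' (u, s) ∂μ = ∫ u in s..t, k (u, s) := by
    intro s hs
    have : (fun u => k' (u, s)) = (Ioi s).indicator fun u => k (u, s) := by
      ext u; by_cases hu : s < u <;> simp [k', hu]
    rw [this, setIntegral_indicator measurableSet_Ioi, Ioc_inter_Ioi, max_eq_right hs.1.le,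
      intervalIntegral.integral_of_le hs.2]
  rw [intervalIntegral.integral_of_le ht, intervalIntegral.integral_of_le ht,
    ← setIntegral_congr_fun measurableSet_Ioc inner_u,
    ← setIntegral_congr_fun measurableSet_Ioc inner_s]
  exact (integral_integral_swap hint).symm

theorem volterraConv_assoc [CompleteSpace G] [CompleteSpace H] {A : ℝ → G →L[ℂ] H}
    {B : ℝ → E →L[ℂ] G} {w : ℝ → E} (hA : StronglyContinuousLocallyBounded A)
    (hB : StronglyContinuousLocallyBounded B) (hw : Continuous w) {t : ℝ} (ht : 0 ≤ t) :
    ∫ s in (0 : ℝ)..t, volterraConv A (fun r => B r (w s)) (t - s) =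
      volterraConv A (volterraConv B w) t := by
  set k : ℝ × ℝ → H := fun p => A (t - p.1) (B (p.1 - p.2) (w p.2))
  have hk : Continuous k :=
    hA.continuous_comp (by fun_prop) (hB.continuous_comp (by fun_prop) (hw.comp continuous_snd))
  have shift : ∀ s, volterraConv A (fun r => B r (w s)) (t - s) = ∫ u in s..t, k (u, s) := by
    intro s
    have h := intervalIntegral.integral_comp_add_right (fun u => k (u, s)) s (a := 0) (b := t - s)
    rw [zero_add, sub_add_cancel] at h
    rw [volterraConv, ← h]
    refine intervalIntegral.integral_congr fun r _ => ?_
    simp only [k, add_sub_cancel_right, sub_sub, add_comm s r]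
  simp only [shift, intervalIntegral_integral_swap_triangle hk ht]
  refine intervalIntegral.integral_congr fun u _ => ?_
  rw [volterraConv, (A (t - u)).intervalIntegral_comp_comm
    (hB.intervalIntegrable_apply_sub hw u 0 u)]

end Convolution

theorem le_mul_exp_of_le_add_integral {a : ℝ → ℝ} {G K T : ℝ} (ha : Continuous a) (hK : 0 ≤ K)
    (h : ∀ t ∈ Icc 0 T, a t ≤ G + K * ∫ s in (0 : ℝ)..t, a s) :
    ∀ t ∈ Icc 0 T, a t ≤ G * Real.exp (K * t) := by
  have hderiv : ∀ t, HasDerivAt (fun t => ∫ s in (0 : ℝ)..t, a s) (a t) t := fun t =>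
    (ha.integral_hasStrictDerivAt 0 t).hasDerivAt
  have hprim := le_gronwallBound_of_liminf_deriv_right_le (f := fun t => ∫ s in (0 : ℝ)..t, a s)
    (a := 0) (b := T) (δ := 0) (K := K) (ε := G)
    (continuous_iff_continuousAt.2 fun t => (hderiv t).continuousAt).continuousOn
    (fun t _ r hr => (hderiv t).hasDerivWithinAt.liminf_right_slope_le hr) (by simp)
    (fun t ht => by linarith [h t (Ico_subset_Icc_self ht)])
  intro t ht
  have hbound := h t ht
  have hU := mul_le_mul_of_nonneg_left (hprim t ht) hK
  rw [sub_zero] at hU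
  rcases hK.eq_or_lt with rfl | hKpos
  · simpa using hbound
  · rw [gronwallBound_of_K_ne_0 hKpos.ne'] at hU
    calc a t ≤ G + K * (0 * Real.exp (K * t) + G / K * (Real.exp (K * t) - 1)) := by linarith
      _ = G * Real.exp (K * t) := by field_simp; ring

theorem mul_integral_mul_pow_div_factorial (M C t : ℝ) (n : ℕ) :
    C * ∫ s in (0 : ℝ)..t, M * (C * s) ^ n / n.factorial =
      M * (C * t) ^ (n + 1) / (n + 1).factorial := by
  simp only [mul_pow, intervalIntegral.integral_div, intervalIntegral.integral_const_mul,
    integral_pow, Nat.factorial_succ, Nat.cast_mul]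
  field_simp
  push_cast
  ring

theorem le_mul_pow_div_factorial_of_le_integral {a : ℕ → ℝ → ℝ} {C M T : ℝ} (hC : 0 ≤ C)
    (ha : ∀ n, Continuous (a n)) (h0 : ∀ t ∈ Icc 0 T, a 0 t ≤ M)
    (hsucc : ∀ n, ∀ t ∈ Icc 0 T, a (n + 1) t ≤ C * ∫ s in (0 : ℝ)..t, a n s) (n : ℕ) :
    ∀ t ∈ Icc 0 T, a n t ≤ M * (C * t) ^ n / n.factorial := by
  induction n with
  | zero => simpa using h0
  | succ n ih =>
    intro t ht
    calc a (n + 1) t ≤ C * ∫ s in (0 : ℝ)..t, a n s := hsucc n t ht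
      _ ≤ C * ∫ s in (0 : ℝ)..t, M * (C * s) ^ n / n.factorial := by
          refine mul_le_mul_of_nonneg_left (intervalIntegral.integral_mono_on ht.1
            ((ha n).intervalIntegrable 0 t)
            (Continuous.intervalIntegrable (by fun_prop) 0 t) fun s hs => ?_) hC
          exact ih s ⟨hs.1, hs.2.trans ht.2⟩
      _ = M * (C * t) ^ (n + 1) / (n + 1).factorial := mul_integral_mul_pow_div_factorial M C t n

section Volterra

variable {Y : Type*} [NormedAddCommGroup Y] [NormedSpace ℂ Y]
  {K : ℝ → Y →L[ℂ] Y} {g h u v : ℝ → Y} {T : ℝ}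

def IsVolterraSol (K : ℝ → Y →L[ℂ] Y) (g u : ℝ → Y) (T : ℝ) : Prop :=
  ∀ t ∈ Icc 0 T, u t = g t + volterraConv K u t

namespace IsVolterraSol

theorem mono (hu : IsVolterraSol K g u T) {T' : ℝ} (hT : T' ≤ T) : IsVolterraSol K g u T' :=
  fun t ht => hu t ⟨ht.1, ht.2.trans hT⟩

theorem congr (hu : IsVolterraSol K g u T) (huv : EqOn u v (Icc 0 T)) :
    IsVolterraSol K g v T := by
  intro t ht
  rw [← huv ht, hu t ht,
    volterraConv_congr ht.1 (eqOn_refl K _) (huv.mono (Icc_subset_Icc_right ht.2))]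

theorem add (hK : StronglyContinuousLocallyBounded K) (hu : Continuous u) (hv : Continuous v)
    (hgu : IsVolterraSol K g u T) (hhv : IsVolterraSol K h v T) :
    IsVolterraSol K (g + h) (u + v) T := by
  intro t ht
  simp only [volterraConv_add hK hu hv, Pi.add_apply]
  rw [hgu t ht, hhv t ht]
  abel

theorem sub (hK : StronglyContinuousLocallyBounded K) (hu : Continuous u) (hv : Continuous v)
    (hgu : IsVolterraSol K g u T) (hhv : IsVolterraSol K h v T) :
    IsVolterraSol K (g - h) (u - v) T := by
  intro t ht
  simp only [volterraConv_sub hK hu hv, Pi.sub_apply]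
  rw [hgu t ht, hhv t ht]
  abel

theorem smul (hu : IsVolterraSol K g u T) (c : ℂ) : IsVolterraSol K (c • g) (c • u) T := by
  intro t ht
  simp only [volterraConv_smul, Pi.smul_apply]
  rw [hu t ht, smul_add]

theorem norm_le (hu : Continuous u) (hgu : IsVolterraSol K g u T) {C G : ℝ} (hC0 : 0 ≤ C)
    (hC : ∀ t ∈ Icc 0 T, ‖K t‖ ≤ C) (hG : ∀ t ∈ Icc 0 T, ‖g t‖ ≤ G) :
    ∀ t ∈ Icc 0 T, ‖u t‖ ≤ G * Real.exp (C * t) := by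
  refine le_mul_exp_of_le_add_integral hu.norm hC0 fun t ht => ?_
  rw [hgu t ht]
  exact (norm_add_le _ _).trans (add_le_add (hG t ht)
    (norm_volterraConv_le ht.1 (fun s hs => hC s ⟨hs.1, hs.2.trans ht.2⟩) hu))

theorem eqOn_zero (hK : StronglyContinuousLocallyBounded K) (hu : Continuous u)
    (hu0 : IsVolterraSol K 0 u T) : EqOn u 0 (Icc 0 T) := by
  obtain ⟨C, hC0, hC⟩ := hK.exists_nonneg_bound (isCompact_Icc (a := 0) (b := T))
  intro t ht
  simpa using hu0.norm_le hu hC0 hC (G := 0) (by simp) t ht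

theorem eqOn (hK : StronglyContinuousLocallyBounded K) (hu : Continuous u) (hv : Continuous v)
    (hgu : IsVolterraSol K g u T) (hgv : IsVolterraSol K g v T) : EqOn u v (Icc 0 T) := by
  have hdiff := hgu.sub hK hu hv hgv
  rw [sub_self] at hdiff
  exact fun t ht => sub_eq_zero.1 (hdiff.eqOn_zero hK (hu.sub hv) ht)

end IsVolterraSol

section Picard

variable (hK : StronglyContinuousLocallyBounded K) (hg : Continuous g) (hT : 0 ≤ T)

noncomputable def picardMap (φ : C(Icc 0 T, Y)) : C(Icc 0 T, Y) where
  toFun t := g t + volterraConv K (IccExtend hT φ) t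
  continuous_toFun :=
    (hg.add (hK.continuous_volterraConv φ.continuous.Icc_extend')).comp continuous_subtype_val

theorem IccExtend_picardMap (φ : C(Icc 0 T, Y)) {t : ℝ} (ht : t ∈ Icc 0 T) :
    IccExtend hT (picardMap hK hg hT φ) t = g t + volterraConv K (IccExtend hT φ) t := by
  rw [IccExtend_of_mem _ _ ht]
  rfl

theorem norm_IccExtend_picardMap_sub_le {C : ℝ} (hC : ∀ t ∈ Icc 0 T, ‖K t‖ ≤ C)
    (φ ψ : C(Icc 0 T, Y)) {t : ℝ} (ht : t ∈ Icc 0 T) :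
    ‖IccExtend hT (picardMap hK hg hT φ) t - IccExtend hT (picardMap hK hg hT ψ) t‖ ≤
      C * ∫ s in (0 : ℝ)..t, ‖IccExtend hT φ s - IccExtend hT ψ s‖ := by
  rw [IccExtend_picardMap hK hg hT _ ht, IccExtend_picardMap hK hg hT _ ht,
    add_sub_add_left_eq_sub, ← Pi.sub_apply (volterraConv K _),
    ← volterraConv_sub hK φ.continuous.Icc_extend' ψ.continuous.Icc_extend']
  exact norm_volterraConv_le ht.1 (fun s hs => hC s ⟨hs.1, hs.2.trans ht.2⟩)
    (φ.continuous.Icc_extend'.sub ψ.continuous.Icc_extend')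

theorem dist_picardMap_iterate_le {C : ℝ} (hC0 : 0 ≤ C) (hC : ∀ t ∈ Icc 0 T, ‖K t‖ ≤ C)
    (n : ℕ) (φ ψ : C(Icc 0 T, Y)) :
    dist ((picardMap hK hg hT)^[n] φ) ((picardMap hK hg hT)^[n] ψ) ≤
      (C * T) ^ n / n.factorial * dist φ ψ := by
  set Φ := picardMap hK hg hT
  set a : ℕ → ℝ → ℝ := fun n t => ‖IccExtend hT (Φ^[n] φ) t - IccExtend hT (Φ^[n] ψ) t‖
  have ha : ∀ n, Continuous (a n) := fun n =>
    ((Φ^[n] φ).continuous.Icc_extend'.sub (Φ^[n] ψ).continuous.Icc_extend').norm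
  have h0 : ∀ t ∈ Icc 0 T, a 0 t ≤ dist φ ψ := fun t ht => by
    simpa [a, IccExtend_of_mem _ _ ht, ← dist_eq_norm] using φ.dist_apply_le_dist ⟨t, ht⟩
  have hsucc : ∀ n, ∀ t ∈ Icc 0 T, a (n + 1) t ≤ C * ∫ s in (0 : ℝ)..t, a n s := by
    intro n t ht
    simp only [a, Function.iterate_succ_apply']
    exact norm_IccExtend_picardMap_sub_le hK hg hT hC _ _ ht
  refine (ContinuousMap.dist_le (by positivity)).2 fun t => ?_
  have hn := le_mul_pow_div_factorial_of_le_integral hC0 ha h0 hsucc n t t.2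
  simp only [a, IccExtend_val, ← dist_eq_norm] at hn
  have ht := t.2
  calc _ ≤ dist φ ψ * (C * t) ^ n / n.factorial := hn
    _ ≤ dist φ ψ * (C * T) ^ n / n.factorial := by gcongr; exacts [mul_nonneg hC0 ht.1, ht.2]
    _ = _ := by ring

end Picard

theorem exists_isVolterraSol [CompleteSpace Y] (hK : StronglyContinuousLocallyBounded K)
    (hg : Continuous g) (hT : 0 ≤ T) : ∃ u, Continuous u ∧ IsVolterraSol K g u T := by
  obtain ⟨C, hC0, hC⟩ := hK.exists_nonneg_bound (isCompact_Icc (a := 0) (b := T))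
  obtain ⟨n, hn⟩ := ((FloorSemiring.tendsto_pow_div_factorial_atTop (C * T)).eventually
    (gt_mem_nhds one_pos)).exists
  have hcontr : ContractingWith (Real.toNNReal ((C * T) ^ n / n.factorial))
      (picardMap hK hg hT)^[n] := by
    refine ⟨Real.toNNReal_lt_one.2 hn, LipschitzWith.of_dist_le_mul fun φ ψ => ?_⟩
    rw [Real.coe_toNNReal _ (by positivity)]
    exact dist_picardMap_iterate_le hK hg hT hC0 hC n φ ψ
  have : Nonempty C(Icc 0 T, Y) := ⟨0⟩
  set φ := hcontr.fixedPoint _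
  have hfix : picardMap hK hg hT φ = φ := hcontr.isFixedPt_fixedPoint_iterate
  refine ⟨IccExtend hT φ, φ.continuous.Icc_extend', fun t ht => ?_⟩
  have := IccExtend_picardMap hK hg hT φ ht
  rwa [hfix] at this

theorem exists_forall_isVolterraSol [CompleteSpace Y] (hK : StronglyContinuousLocallyBounded K)
    (hg : Continuous g) : ∃ u, Continuous u ∧ ∀ T, IsVolterraSol K g u T := by
  choose v hv hsol using fun T : ℝ => exists_isVolterraSol hK hg (le_max_right T 0)
  have hsolT : ∀ T, IsVolterraSol K g (v T) T := fun T => (hsol T).mono (le_max_left T 0)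
  set U : ℝ → Y := fun t => v t t
  have hU : ∀ T, EqOn U (v T) (Icc 0 T) := fun T t ht =>
    (hsolT t).eqOn hK (hv t) (hv T) ((hsolT T).mono ht.2) ⟨ht.1, le_rfl⟩
  have hUcont : ContinuousOn U (Ici 0) := by
    intro t ht
    have hmem : Icc 0 (t + 1) ∈ 𝓝[Ici 0] t :=
      mem_nhdsWithin.2 ⟨Iio (t + 1), isOpen_Iio, by simp, fun s hs => ⟨hs.2, hs.1.le⟩⟩
    exact (hv (t + 1)).continuousWithinAt.congr_of_eventuallyEq
      (eventually_of_mem hmem (hU (t + 1))) (hU (t + 1) ⟨ht, by linarith⟩)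
  refine ⟨fun t => U (max t 0), hUcont.comp_continuous (continuous_id.max continuous_const)
    (fun t => le_max_right t 0), fun T => (hsolT T).congr fun t ht => ?_⟩
  simp only [max_eq_left ht.1]
  exact (hU T ht).symm

end Volterra

def extendLeft {α : Type*} (χ : ℝ → α) (t : ℝ) : α := χ (max t 0)

theorem eqOn_extendLeft {α : Type*} (χ : ℝ → α) : EqOn (extendLeft χ) χ (Ici 0) :=
  fun t ht => by rw [extendLeft, max_eq_left ht]

section Dyson

variable {X Y : Type*} [NormedAddCommGroup X] [NormedSpace ℂ X]
  [NormedAddCommGroup Y] [NormedSpace ℂ Y]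
  {F : Y →L[ℂ] X} {A A' B B' χ : ℝ → X →L[ℂ] Y}

theorem DysonGood.extendLeft (h : DysonGood χ) :
    StronglyContinuousLocallyBounded (extendLeft χ) where
  continuous_apply x :=
    (h.1 x).comp_continuous (continuous_id.max continuous_const) fun t => le_max_right t 0
  exists_bound S hS := by
    obtain ⟨R, hR⟩ := hS.bddAbove
    obtain ⟨C, hC⟩ := h.2 (max R 0)
    exact ⟨C, fun t ht => hC _ ⟨le_max_right t 0, max_le_max (hR ht) le_rfl⟩⟩

theorem StronglyContinuousLocallyBounded.dysonGood (h : StronglyContinuousLocallyBounded χ) :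
    DysonGood χ :=
  ⟨fun x => (h.continuous_apply x).continuousOn, fun _ => h.exists_bound _ isCompact_Icc⟩

theorem exists_norm_le_of_isVolterraSol_apply (hA : StronglyContinuousLocallyBounded A)
    {u : X → ℝ → Y} (hu : ∀ x, Continuous (u x)) {R : ℝ}
    (hsol : ∀ x, IsVolterraSol (fun t => (A t).comp F) (fun t => A t x) (u x) R) :
    ∃ M, 0 ≤ M ∧ ∀ x, ∀ s ∈ Icc 0 R, ‖u x s‖ ≤ M * ‖x‖ := by
  obtain ⟨C, hC0, hC⟩ := hA.exists_nonneg_bound (isCompact_Icc (a := 0) (b := R))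
  refine ⟨C * Real.exp (C * ‖F‖ * R), by positivity, fun x s hs => ?_⟩
  calc ‖u x s‖ ≤ C * ‖x‖ * Real.exp (C * ‖F‖ * s) :=
        (hsol x).norm_le (hu x) (by positivity)
          (fun t ht => ((A t).opNorm_comp_le F).trans (by gcongr; exact hC t ht))
          (fun t ht => (A t).le_of_opNorm_le (hC t ht) x) s hs
    _ ≤ C * ‖x‖ * Real.exp (C * ‖F‖ * R) := by gcongr; exact hs.2
    _ = C * Real.exp (C * ‖F‖ * R) * ‖x‖ := by ring

variable [CompleteSpace Y]

theorem dysonSol_iff_forall_isVolterraSol : DysonSol F A B ↔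
    ∀ x T, IsVolterraSol (fun t => (A t).comp F) (fun t => A t x) (fun t => B t x) T :=
  ⟨fun h x _ t ht => h t ht.1 x, fun h t ht x => h x t t ⟨ht, le_rfl⟩⟩

theorem DysonSol.congr (h : DysonSol F A B) (hA : EqOn A A' (Ici 0)) (hB : EqOn B B' (Ici 0)) :
    DysonSol F A' B' := by
  intro t ht x
  have hIcc : Icc 0 t ⊆ Ici 0 := Icc_subset_Ici_self
  have hconv : volterraConv A (fun s => F (B s x)) t = volterraConv A' (fun s => F (B' s x)) t :=
    volterraConv_congr ht (hA.mono hIcc) fun s hs => by simp only [hB (hIcc hs)]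
  rw [← hB ht, ← hA ht]
  exact (h t ht x).trans (congrArg (A t x + ·) hconv)

theorem DysonSol.extendLeft {χ0 χF : ℝ → X →L[ℂ] Y} (h : DysonSol F χ0 χF) :
    DysonSol F (extendLeft χ0) (extendLeft χF) :=
  h.congr (eqOn_extendLeft χ0).symm (eqOn_extendLeft χF).symm

theorem exists_dysonSol (hA : StronglyContinuousLocallyBounded A) (F : Y →L[ℂ] X) :
    ∃ B, StronglyContinuousLocallyBounded B ∧ DysonSol F A B := by
  have hK := hA.comp_right F
  choose u hu hsol using fun x => exists_forall_isVolterraSol hK (hA.continuous_apply x)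
  have hadd : ∀ x y T, EqOn (u (x + y)) (u x + u y) (Icc 0 T) := by
    intro x y T
    have hsum := (hsol x T).add hK (hu x) (hu y) (hsol y T)
    rw [show ((fun t => A t x) + fun t => A t y) = fun t => A t (x + y) from
      funext fun t => (map_add (A t) x y).symm] at hsum
    exact (hsol (x + y) T).eqOn hK (hu _) ((hu x).add (hu y)) hsum
  have hsmul : ∀ (c : ℂ) x T, EqOn (u (c • x)) (c • u x) (Icc 0 T) := by
    intro c x T
    have hc := (hsol x T).smul c
    rw [show (c • fun t => A t x) = fun t => A t (c • x) from
      funext fun t => (map_smul (A t) c x).symm] at hc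
    exact (hsol (c • x) T).eqOn hK (hu _) ((hu x).const_smul c) hc
  have hbound := fun R => exists_norm_le_of_isVolterraSol_apply hA hu fun x => hsol x R
  let B : ℝ → X →L[ℂ] Y := fun t => LinearMap.mkContinuousOfExistsBound
    { toFun := fun x => u x (max t 0)
      map_add' := fun x y => hadd x y _ ⟨le_max_right t 0, le_rfl⟩
      map_smul' := fun c x => hsmul c x _ ⟨le_max_right t 0, le_rfl⟩ }
    (by
      obtain ⟨M, -, hM⟩ := hbound (max t 0)
      exact ⟨M, fun x => hM x _ ⟨le_max_right t 0, le_rfl⟩⟩)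
  refine ⟨B, ⟨fun x => (hu x).comp (continuous_id.max continuous_const), fun S hS => ?_⟩,
    dysonSol_iff_forall_isVolterraSol.2 fun x T => (hsol x T).congr fun t ht => ?_⟩
  · obtain ⟨R, hR⟩ := hS.bddAbove
    obtain ⟨M, hM0, hM⟩ := hbound (max R 0)
    exact ⟨M, fun t ht => (B t).opNorm_le_bound hM0 fun x =>
      hM x _ ⟨le_max_right t 0, max_le_max (hR ht) le_rfl⟩⟩
  · show u x t = u x (max t 0)
    rw [max_eq_left ht.1]

theorem DysonSol.eqOn (hA : StronglyContinuousLocallyBounded A)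
    (hB : StronglyContinuousLocallyBounded B) (hB' : StronglyContinuousLocallyBounded B')
    (h : DysonSol F A B) (h' : DysonSol F A B') : EqOn B B' (Ici 0) := fun t ht =>
  ContinuousLinearMap.ext fun x =>
    (dysonSol_iff_forall_isVolterraSol.1 h x t).eqOn (hA.comp_right F) (hB.continuous_apply x)
      (hB'.continuous_apply x) (dysonSol_iff_forall_isVolterraSol.1 h' x t) ⟨ht, le_rfl⟩

theorem DysonSol.volterraConv_comm (hA : StronglyContinuousLocallyBounded A)
    (hB : StronglyContinuousLocallyBounded B) (h : DysonSol F A B) (x : X) {t : ℝ}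
    (ht : 0 ≤ t) :
    volterraConv A (fun s => F (B s x)) t = volterraConv B (fun s => F (A s x)) t := by
  set K := fun t => (A t).comp F
  have hK : StronglyContinuousLocallyBounded K := hA.comp_right F
  set w := fun s => F (A s x)
  have hw : Continuous w := F.continuous.comp (hA.continuous_apply x)
  have hBx : Continuous fun s => B s x := hB.continuous_apply x
  have hP : IsVolterraSol K (volterraConv A w) (volterraConv K fun s => B s x) t := by
    intro τ hτ
    rw [volterraConv_congr (v := (fun s => A s x) + volterraConv K fun s => B s x) hτ.1
        (eqOn_refl K _) fun s hs => h s hs.1 x,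
      volterraConv_add hK (hA.continuous_apply x) (hK.continuous_volterraConv hBx)]
    rfl
  have hQ : IsVolterraSol K (volterraConv A w) (volterraConv B w) t := by
    intro τ hτ
    have hdiff : volterraConv B w τ - volterraConv A w τ =
        ∫ s in (0 : ℝ)..τ, volterraConv K (fun r => B r (w s)) (τ - s) := by
      rw [volterraConv, volterraConv, ← intervalIntegral.integral_sub
        (hB.intervalIntegrable_apply_sub hw τ 0 τ) (hA.intervalIntegrable_apply_sub hw τ 0 τ)]
      refine intervalIntegral.integral_congr fun s hs => ?_
      rw [uIcc_of_le hτ.1] at hs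
      simp only [h (τ - s) (sub_nonneg.2 hs.2) (w s), add_sub_cancel_left]
      rfl
    rw [← volterraConv_assoc hK hB hw hτ.1, ← hdiff, add_sub_cancel]
  exact hP.eqOn hK (hK.continuous_volterraConv hBx) (hB.continuous_volterraConv hw) hQ
    ⟨ht, le_rfl⟩

theorem DysonSol.symm (hA : StronglyContinuousLocallyBounded A)
    (hB : StronglyContinuousLocallyBounded B) (h : DysonSol F A B) : DysonSol (-F) B A := by
  intro t ht x
  have hB_t : B t x = A t x + volterraConv A (fun s => F (B s x)) t := h t ht x
  calc A t x = B t x - volterraConv B (fun s => F (A s x)) t := by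
        rw [← h.volterraConv_comm hA hB x ht, hB_t, add_sub_cancel_right]
    _ = _ := by
        simp [volterraConv, sub_eq_add_neg, intervalIntegral.integral_neg]

end Dyson

/-- The solution map `𝒮_F : χ0 ↦ χF` of the Dyson equation is a
bijection on the space of strongly continuous, uniformly-bounded-on-compacts
`𝓑(X,Y)`-valued functions on `ℝ₊`: for every datum there is a unique solution in this
space (unique as a function on `ℝ₊`), and the inverse is the solution map `𝒮_{-F}`,
i.e. `χF = 𝒮_F χ0 ↔ χ0 = 𝒮_{-F} χF`. -/
theorem stmt13 {X Y : Type*} [NormedAddCommGroup X] [NormedSpace ℂ X]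
    [NormedAddCommGroup Y] [NormedSpace ℂ Y] [CompleteSpace Y]
    (F : Y →L[ℂ] X) :
    (∀ χ0 : ℝ → X →L[ℂ] Y, DysonGood χ0 →
      (∃ χF, DysonGood χF ∧ DysonSol F χ0 χF) ∧
        ∀ χF χF', DysonGood χF → DysonGood χF' →
          DysonSol F χ0 χF → DysonSol F χ0 χF' → ∀ t : ℝ, 0 ≤ t → χF t = χF' t) ∧
    (∀ χ0 χF : ℝ → X →L[ℂ] Y, DysonGood χ0 → DysonGood χF →
      (DysonSol F χ0 χF ↔ DysonSol (-F) χF χ0)) := by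
  have hinv : ∀ {G : Y →L[ℂ] X} {φ ψ : ℝ → X →L[ℂ] Y}, DysonGood φ → DysonGood ψ →
      DysonSol G φ ψ → DysonSol (-G) ψ φ := fun hφ hψ h =>
    (h.extendLeft.symm hφ.extendLeft hψ.extendLeft).congr (eqOn_extendLeft _) (eqOn_extendLeft _)
  refine ⟨fun χ0 h0 => ⟨?_, fun χF χF' hF hF' hs hs' t ht => ?_⟩,
    fun χ0 χF h0 hF => ⟨hinv h0 hF, fun h => by simpa using hinv hF h0 h⟩⟩
  · obtain ⟨B, hB, hsol⟩ := exists_dysonSol h0.extendLeft F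
    exact ⟨B, hB.dysonGood, hsol.congr (eqOn_extendLeft χ0) (eqOn_refl B _)⟩
  · have := hs.extendLeft.eqOn h0.extendLeft hF.extendLeft hF'.extendLeft hs'.extendLeft ht
    rwa [eqOn_extendLeft χF ht, eqOn_extendLeft χF' ht] at this
end

section
/- Let $H = -\Delta + V$ on $L^2(\mathbb{R}^{3N})$ have normalized ground state $\Psi_0$ with density $\rho_0 \in L^1(\mathbb{R}^3) \cap L^\infty(\mathbb{R}^3)$. The integral operator $T$ on $L^2(\mathbb{R}^{3N})$ with kernel $T(r_1,\ldots,r_N; r_1',\ldots,r_N') = N\sum_{j=1}^N \overline{\Psi_0(r_1,\ldots,r_N)}\Psi_0(r_1',\ldots,r_N')/|r_j - r_1'|$ is Hilbert-Schmidt, with $\|T\|_{HS}^2 \lesssim \int_{\mathbb{R}^6} \frac{\rho_0(r)\rho_0(r')}{|r-r'|^2}drdr' \le \|\rho_0\|_{L^1\cap L^\infty}^2 \| |\cdot|^{-2}\|_{L^1 + L^\infty} < \infty$. -/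
/-!
Cauchy–Schwarz in the sum over `j` bounds `|T|²` pointwise by
`N³ ∑ⱼ |Ψ₀(r)|² |r_j - r'_1|⁻² |Ψ₀(r')|²`. Integrating out all variables but `r_j` and `r'_1`
with the marginal identity turns each of the `N` terms into `N⁻² ∫∫ ρ₀(r) ρ₀(r') |r - r'|⁻²`,
so `‖T‖²_HS ≤ N² ∫∫ ρ₀(r) ρ₀(r') |r - r'|⁻²`. This integral is finite by the splitting
`|x|⁻² ≤ 1_{|x|<1} |x|⁻² + 1`: the first piece is integrable since `2 < 3`, and is paired with
`ρ₀ ∈ L¹` in one variable and `ρ₀ ∈ L^∞` in the other; the second only needs `ρ₀ ⊗ ρ₀ ∈ L¹`.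
-/

open MeasureTheory ENNReal NNReal Metric Module

theorem ofReal_rpow_neg_norm_le_indicator_add_one {E : Type*} [SeminormedAddCommGroup E] {α : ℝ}
    (hα : 0 ≤ α) (x : E) :
    ENNReal.ofReal (‖x‖ ^ (-α))
      ≤ (ball 0 1).indicator (fun y => ENNReal.ofReal (‖y‖ ^ (-α))) x + 1 := by
  by_cases hx : x ∈ ball (0 : E) 1
  · simp [Set.indicator_of_mem hx]
  · rw [Set.indicator_of_notMem hx, zero_add, ENNReal.ofReal_le_one]
    exact Real.rpow_le_one_of_one_le_of_nonpos (by simpa using hx) (neg_nonpos.2 hα)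

theorem ofReal_mul_div_sq_le (a b : ℝ) {d : ℝ} (hd : 0 ≤ d) :
    ENNReal.ofReal (a * b / d ^ 2) ≤ ‖a‖ₑ * ENNReal.ofReal (d ^ (-2 : ℝ)) * ‖b‖ₑ := by
  rw [Real.enorm_eq_ofReal_abs, Real.enorm_eq_ofReal_abs, ← ENNReal.ofReal_mul (abs_nonneg a),
    ← ENNReal.ofReal_mul (by positivity), Real.rpow_neg hd, Real.rpow_two]
  gcongr
  calc a * b / d ^ 2 ≤ |a * b / d ^ 2| := le_abs_self _
    _ = |a| * (d ^ 2)⁻¹ * |b| := by rw [abs_div, abs_mul, abs_of_nonneg (sq_nonneg d)]; ring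

theorem ofReal_mul_ofReal_inv_sq_mul_ofReal_le (a b d : ℝ) :
    ENNReal.ofReal a * ENNReal.ofReal (d ^ 2)⁻¹ * ENNReal.ofReal b
      ≤ ENNReal.ofReal (a * b / d ^ 2) := by
  rcases lt_or_ge a 0 with ha | ha
  · simp [ENNReal.ofReal_of_nonpos ha.le]
  rcases lt_or_ge b 0 with hb | hb
  · simp [ENNReal.ofReal_of_nonpos hb.le]
  rw [← ENNReal.ofReal_mul ha, ← ENNReal.ofReal_mul (by positivity)]
  exact (congrArg ENNReal.ofReal (by ring)).le

theorem enorm_sum_sq_le {ι E : Type*} [SeminormedAddCommGroup E] (s : Finset ι) (a : ι → E) :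
    ‖∑ i ∈ s, a i‖ₑ ^ 2 ≤ s.card * ∑ i ∈ s, ‖a i‖ₑ ^ 2 := by
  have h : ‖∑ i ∈ s, a i‖₊ ^ 2 ≤ s.card * ∑ i ∈ s, ‖a i‖₊ ^ 2 :=
    (pow_le_pow_left₀ zero_le (nnnorm_sum_le s a) 2).trans sq_sum_le_card_mul_sum_sq
  simp only [enorm_eq_nnnorm]
  exact_mod_cast h

theorem enorm_div_ofReal_sq (z : ℂ) (d : ℝ) :
    ‖z / (d : ℂ)‖ₑ ^ 2 = ‖z‖ₑ ^ 2 * ENNReal.ofReal (d ^ 2)⁻¹ := by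
  rw [← ofReal_norm, ← ofReal_norm, ← ENNReal.ofReal_pow (norm_nonneg _),
    ← ENNReal.ofReal_pow (norm_nonneg _), ← ENNReal.ofReal_mul (by positivity), norm_div,
    Complex.norm_real, Real.norm_eq_abs, div_pow, sq_abs, div_eq_mul_inv]

theorem enorm_natCast_mul_sum_div_sq_le (N : ℕ) (z w : ℂ) (d : Fin N → ℝ) :
    ‖(N : ℂ) * ∑ j, z * w / (d j : ℂ)‖ₑ ^ 2
      ≤ N ^ 3 * ∑ j, ‖z‖ₑ ^ 2 * ENNReal.ofReal (d j ^ 2)⁻¹ * ‖w‖ₑ ^ 2 := by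
  calc ‖(N : ℂ) * ∑ j, z * w / (d j : ℂ)‖ₑ ^ 2
      = N ^ 2 * ‖∑ j, z * w / (d j : ℂ)‖ₑ ^ 2 := by
        rw [enorm_mul, mul_pow, show ‖(N : ℂ)‖ₑ = N by simp [enorm_eq_nnnorm]]
    _ ≤ N ^ 2 * (N * ∑ j, ‖z * w / (d j : ℂ)‖ₑ ^ 2) := by
        gcongr
        simpa using enorm_sum_sq_le Finset.univ fun j => z * w / (d j : ℂ)
    _ = N ^ 3 * ∑ j, ‖z‖ₑ ^ 2 * ENNReal.ofReal (d j ^ 2)⁻¹ * ‖w‖ₑ ^ 2 := by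
        simp_rw [enorm_div_ofReal_sq, enorm_mul]
        ring_nf

theorem lintegral_prod_mul_kernel_le {G : Type*} [MeasurableSpace G] [AddGroup G]
    [MeasurableAdd G] {ν : Measure G} [ν.IsAddRightInvariant] [SFinite ν] {f k : G → ℝ≥0∞}
    (hf : AEMeasurable f ν) (hk : Measurable k) (g : G → ℝ≥0∞) :
    ∫⁻ p, f p.1 * k (p.2 - p.1) * g p.2 ∂ν.prod ν
      ≤ (∫⁻ x, f x ∂ν) * (∫⁻ x, k x ∂ν) * essSup g ν := by
  calc ∫⁻ p, f p.1 * k (p.2 - p.1) * g p.2 ∂ν.prod ν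
      ≤ ∫⁻ x, ∫⁻ y, f x * essSup g ν * k (y - x) ∂ν ∂ν := by
        refine (lintegral_prod_le _).trans (lintegral_mono fun x => lintegral_mono_ae ?_)
        filter_upwards [ENNReal.ae_le_essSup g] with y hy
        calc f x * k (y - x) * g y ≤ f x * k (y - x) * essSup g ν := by gcongr
          _ = _ := by ring
    _ = ∫⁻ x, f x * ((∫⁻ x, k x ∂ν) * essSup g ν) ∂ν := by
        congr with x
        have hkx : Measurable fun y => k (y - x) := by
          simp_rw [sub_eq_add_neg]
          exact hk.comp (measurable_add_const (-x))
        rw [lintegral_const_mul _ hkx, lintegral_sub_right_eq_self]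
        ring
    _ = _ := by rw [lintegral_mul_const'' _ hf, mul_assoc]

section AddHaar

variable {E : Type*} [NormedAddCommGroup E] [NormedSpace ℝ E] [FiniteDimensional ℝ E]
  [MeasurableSpace E] [BorelSpace E] {μ : Measure E} [μ.IsAddHaarMeasure]

theorem setLIntegral_ball_rpow_neg_norm_lt_top (hd : 1 ≤ finrank ℝ E) {α : ℝ}
    (hα : α < finrank ℝ E) (r : ℝ) :
    ∫⁻ x in ball 0 r, ENNReal.ofReal (‖x‖ ^ (-α)) ∂μ < ⊤ :=
  (integrableOn_ball_of_norm_le_rpow (C := 1) hd hα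
    (ae_of_all _ fun x => by simp [abs_of_nonneg (Real.rpow_nonneg (norm_nonneg x) _)])
    (measurable_norm.pow_const _).aestronglyMeasurable).setLIntegral_lt_top

theorem lintegral_prod_mul_rpow_neg_dist_mul_lt_top {α : ℝ} (hα₀ : 0 ≤ α)
    (hα : α < finrank ℝ E) {f g : E → ℝ≥0∞} (hf : AEMeasurable f μ) (hg : AEMeasurable g μ)
    (hf₁ : ∫⁻ x, f x ∂μ < ⊤) (hg₁ : ∫⁻ x, g x ∂μ < ⊤) (hg_ess : essSup g μ < ⊤) :
    ∫⁻ p, f p.1 * ENNReal.ofReal (dist p.1 p.2 ^ (-α)) * g p.2 ∂μ.prod μ < ⊤ := by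
  set k := (ball (0 : E) 1).indicator fun y => ENNReal.ofReal (‖y‖ ^ (-α))
  have hk : Measurable k :=
    (measurable_norm.pow_const _).ennreal_ofReal.indicator measurableSet_ball
  have hk₁ : ∫⁻ x, k x ∂μ < ⊤ := by
    rw [lintegral_indicator measurableSet_ball]
    exact setLIntegral_ball_rpow_neg_norm_lt_top (by exact_mod_cast hα₀.trans_lt hα) hα 1
  calc ∫⁻ p, f p.1 * ENNReal.ofReal (dist p.1 p.2 ^ (-α)) * g p.2 ∂μ.prod μ
      ≤ ∫⁻ p, f p.1 * k (p.2 - p.1) * g p.2 + f p.1 * g p.2 ∂μ.prod μ := by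
        refine lintegral_mono fun p => ?_
        calc f p.1 * ENNReal.ofReal (dist p.1 p.2 ^ (-α)) * g p.2
            ≤ f p.1 * (k (p.2 - p.1) + 1) * g p.2 := by
              rw [dist_comm, dist_eq_norm]
              gcongr
              exact ofReal_rpow_neg_norm_le_indicator_add_one hα₀ _
          _ = _ := by ring
    _ = ∫⁻ p, f p.1 * k (p.2 - p.1) * g p.2 ∂μ.prod μ + ∫⁻ p, f p.1 * g p.2 ∂μ.prod μ :=
        lintegral_add_right' _ (hf.comp_fst.mul hg.comp_snd)
    _ ≤ (∫⁻ x, f x ∂μ) * (∫⁻ x, k x ∂μ) * essSup g μ + (∫⁻ x, f x ∂μ) * ∫⁻ x, g x ∂μ :=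
        add_le_add (lintegral_prod_mul_kernel_le hf hk g) (lintegral_prod_mul hf hg).le
    _ < ⊤ := by finiteness

theorem lintegral_ofReal_mul_div_dist_sq_lt_top (hd : 2 < finrank ℝ E) {f g : E → ℝ}
    (hf : MemLp f 1 μ) (hg₁ : MemLp g 1 μ) (hg : MemLp g ⊤ μ) :
    ∫⁻ p, ENNReal.ofReal (f p.1 * g p.2 / dist p.1 p.2 ^ 2) ∂μ.prod μ < ⊤ :=
  (lintegral_mono fun p => ofReal_mul_div_sq_le _ _ dist_nonneg).trans_lt
    (lintegral_prod_mul_rpow_neg_dist_mul_lt_top zero_le_two (by exact_mod_cast hd)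
      hf.1.enorm hg₁.1.enorm (by simpa [eLpNorm_one_eq_lintegral_enorm] using hf.2)
      (by simpa [eLpNorm_one_eq_lintegral_enorm] using hg₁.2) hg.2)

end AddHaar

theorem lintegral_prod_mul_kernel_eq_of_marginal {Ω X : Type*} [MeasurableSpace Ω]
    [MeasurableSpace X] {μ : Measure Ω} [SFinite μ] {ν : Measure X} [SFinite ν]
    {w : Ω → ℝ≥0∞} (hw : AEMeasurable w μ) {ρ : X → ℝ≥0∞} (hρ : Measurable ρ) {c : ℝ≥0∞}
    {π₁ π₂ : Ω → X} (hπ₁ : Measurable π₁) (hπ₂ : Measurable π₂)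
    (h₁ : ∀ φ : X → ℝ≥0∞, Measurable φ → ∫⁻ x, φ (π₁ x) * w x ∂μ = c * ∫⁻ s, φ s * ρ s ∂ν)
    (h₂ : ∀ φ : X → ℝ≥0∞, Measurable φ → ∫⁻ x, φ (π₂ x) * w x ∂μ = c * ∫⁻ s, φ s * ρ s ∂ν)
    {K : X → X → ℝ≥0∞} (hK : Measurable (Function.uncurry K)) :
    ∫⁻ q, w q.1 * K (π₁ q.1) (π₂ q.2) * w q.2 ∂μ.prod μ
      = c ^ 2 * ∫⁻ p, ρ p.1 * K p.1 p.2 * ρ p.2 ∂ν.prod ν := by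
  set F : X → ℝ≥0∞ := fun r => ∫⁻ s, K r s * ρ s ∂ν
  have hF : Measurable F := (hK.mul (hρ.comp measurable_snd)).lintegral_prod_right'
  have hKr : ∀ r, Measurable (K r) := fun r => hK.comp (measurable_const.prodMk measurable_id)
  have hKπ : Measurable fun q : Ω × Ω => K (π₁ q.1) (π₂ q.2) :=
    hK.comp ((hπ₁.comp measurable_fst).prodMk (hπ₂.comp measurable_snd))
  calc ∫⁻ q, w q.1 * K (π₁ q.1) (π₂ q.2) * w q.2 ∂μ.prod μ
      = ∫⁻ x, ∫⁻ y, w x * K (π₁ x) (π₂ y) * w y ∂μ ∂μ :=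
        lintegral_prod _ ((hw.comp_fst.mul hKπ.aemeasurable).mul hw.comp_snd)
    _ = ∫⁻ x, (c * F (π₁ x)) * w x ∂μ := by
        congr with x
        simp_rw [mul_assoc]
        rw [lintegral_const_mul'' (f := fun y => K (π₁ x) (π₂ y) * w y) _
            (((hKr _).comp hπ₂).aemeasurable.mul hw), h₂ _ (hKr _), mul_comm, mul_assoc]
    _ = c ^ 2 * ∫⁻ r, ρ r * F r ∂ν := by
        rw [h₁ (fun r => c * F r) (measurable_const.mul hF)]
        simp_rw [mul_assoc]
        rw [lintegral_const_mul (f := fun s => F s * ρ s) _ (hF.mul hρ), sq, mul_assoc]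
        simp_rw [mul_comm (F _)]
    _ = c ^ 2 * ∫⁻ p, ρ p.1 * K p.1 p.2 * ρ p.2 ∂ν.prod ν := by
        have hKρ : Measurable fun p : X × X => ρ p.1 * K p.1 p.2 * ρ p.2 :=
          ((hρ.comp measurable_fst).mul hK).mul (hρ.comp measurable_snd)
        rw [lintegral_prod _ hKρ.aemeasurable]
        congr with r
        simp_rw [mul_assoc]
        exact (lintegral_const_mul (f := fun s => K r s * ρ s) _ ((hKr r).mul hρ)).symm

theorem lintegral_enorm_sum_div_dist_sq_le {X : Type*} [PseudoMetricSpace X]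
    [SecondCountableTopology X] [MeasurableSpace X] [OpensMeasurableSpace X] {N : ℕ} [NeZero N]
    {μ : Measure (Fin N → X)} [SFinite μ] {ν : Measure X} [SFinite ν] {Ψ : (Fin N → X) → ℂ}
    (hΨ : AEStronglyMeasurable Ψ μ) {ρ : X → ℝ≥0∞} (hρ : Measurable ρ)
    (hmarg : ∀ j : Fin N, ∀ φ : X → ℝ≥0∞, Measurable φ →
      ∫⁻ q, φ (q j) * ‖Ψ q‖ₑ ^ 2 ∂μ = (N : ℝ≥0∞)⁻¹ * ∫⁻ s, φ s * ρ s ∂ν) :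
    ∫⁻ q, ‖(N : ℂ) * ∑ j : Fin N,
        (starRingEnd ℂ) (Ψ q.1) * Ψ q.2 / ((dist (q.1 j) (q.2 0) : ℝ) : ℂ)‖ₑ ^ 2 ∂μ.prod μ
      ≤ N ^ 2 * ∫⁻ p, ρ p.1 * ENNReal.ofReal (dist p.1 p.2 ^ 2)⁻¹ * ρ p.2 ∂ν.prod ν := by
  set K : X → X → ℝ≥0∞ := fun r s => ENNReal.ofReal (dist r s ^ 2)⁻¹
  set w : (Fin N → X) → ℝ≥0∞ := fun x => ‖Ψ x‖ₑ ^ 2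
  have hw : AEMeasurable w μ := hΨ.enorm.pow_const 2
  have hK : Measurable (Function.uncurry K) :=
    ((measurable_fst.dist measurable_snd).pow_const 2).inv.ennreal_ofReal
  have hterm_meas (j : Fin N) :
      AEMeasurable (fun q => w q.1 * K (q.1 j) (q.2 0) * w q.2) (μ.prod μ) := by
    have hKj : Measurable fun q : (Fin N → X) × (Fin N → X) => K (q.1 j) (q.2 0) :=
      ((((measurable_pi_apply j).comp measurable_fst).dist
        ((measurable_pi_apply 0).comp measurable_snd)).pow_const 2).inv.ennreal_ofReal
    exact (hw.comp_fst.mul hKj.aemeasurable).mul hw.comp_snd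
  have hterm (j : Fin N) :
      ∫⁻ q, w q.1 * K (q.1 j) (q.2 0) * w q.2 ∂μ.prod μ
        = (N : ℝ≥0∞)⁻¹ ^ 2 * ∫⁻ p, ρ p.1 * K p.1 p.2 * ρ p.2 ∂ν.prod ν :=
    lintegral_prod_mul_kernel_eq_of_marginal hw hρ (measurable_pi_apply j)
      (measurable_pi_apply 0) (hmarg j) (hmarg 0) hK
  have hN : (N : ℝ≥0∞) * (N : ℝ≥0∞)⁻¹ = 1 :=
    ENNReal.mul_inv_cancel (by simp [NeZero.ne]) (by simp)
  calc _ ≤ ∫⁻ q, N ^ 3 * ∑ j : Fin N, w q.1 * K (q.1 j) (q.2 0) * w q.2 ∂μ.prod μ :=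
        lintegral_mono fun q => by
          refine (enorm_natCast_mul_sum_div_sq_le N _ _ fun j => dist (q.1 j) (q.2 0)).trans_eq ?_
          simp only [RCLike.enorm_conj]
          rfl
    _ = N ^ 2 * (N * (N : ℝ≥0∞)⁻¹) ^ 2 * ∫⁻ p, ρ p.1 * K p.1 p.2 * ρ p.2 ∂ν.prod ν := by
        rw [lintegral_const_mul' _ _ (by simp), lintegral_finsetSum' _ fun j _ => hterm_meas j]
        simp only [hterm, Finset.sum_const, Finset.card_univ, Fintype.card_fin, nsmul_eq_mul]
        ring
    _ = _ := by rw [hN, one_pow, mul_one]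

theorem stmt16_general (N : ℕ) [NeZero N]
    (Ψ0 : (Fin N → EuclideanSpace ℝ (Fin 3)) → ℂ)
    (hΨmeas : AEStronglyMeasurable Ψ0 volume)
    (ρ0 : EuclideanSpace ℝ (Fin 3) → ℝ)
    (hρmeas : Measurable ρ0)
    (hρ1 : MemLp ρ0 1 volume) (hρtop : MemLp ρ0 ⊤ volume)
    (hmarg : ∀ j : Fin N, ∀ φ : EuclideanSpace ℝ (Fin 3) → ℝ≥0∞, Measurable φ →
      ∫⁻ q, φ (q j) * (‖Ψ0 q‖₊ : ℝ≥0∞) ^ 2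
        = (N : ℝ≥0∞)⁻¹ * ∫⁻ s, φ s * ENNReal.ofReal (ρ0 s)) :
    (∫⁻ (p : EuclideanSpace ℝ (Fin 3) × EuclideanSpace ℝ (Fin 3)),
        ENNReal.ofReal (ρ0 p.1 * ρ0 p.2 / dist p.1 p.2 ^ 2)) < ⊤ ∧
    ∃ C : ℝ≥0,
      ∫⁻ (q : (Fin N → EuclideanSpace ℝ (Fin 3)) × (Fin N → EuclideanSpace ℝ (Fin 3))),
          (‖(N : ℂ) * ∑ j : Fin N,
              (starRingEnd ℂ) (Ψ0 q.1) * Ψ0 q.2 / ((dist (q.1 j) (q.2 0) : ℝ) : ℂ)‖₊ : ℝ≥0∞) ^ 2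
        ≤ C * ∫⁻ (p : EuclideanSpace ℝ (Fin 3) × EuclideanSpace ℝ (Fin 3)),
            ENNReal.ofReal (ρ0 p.1 * ρ0 p.2 / dist p.1 p.2 ^ 2) := by
  refine ⟨lintegral_ofReal_mul_div_dist_sq_lt_top (by simp) hρ1 hρ1 hρtop, N ^ 2, ?_⟩
  calc _ ≤ (N : ℝ≥0∞) ^ 2 * ∫⁻ p, ENNReal.ofReal (ρ0 p.1) * ENNReal.ofReal (dist p.1 p.2 ^ 2)⁻¹
          * ENNReal.ofReal (ρ0 p.2) ∂volume.prod volume :=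
        lintegral_enorm_sum_div_dist_sq_le hΨmeas hρmeas.ennreal_ofReal hmarg
    _ ≤ _ := by
        push_cast
        exact mul_le_mul_right
          (lintegral_mono fun p => ofReal_mul_ofReal_inv_sq_mul_ofReal_le _ _ _) _

/-- Let `Ψ0 ∈ L²((ℝ³)^N)` be a normalized (ground state) wave
function whose one-particle density `ρ0` (characterized by the marginal identity
`∫ φ(r_j)|Ψ0|² = (1/N) ∫ φ ρ0` for each coordinate `j`, which holds with the same `ρ0`
for all `j` by antisymmetry) lies in `L¹(ℝ³) ∩ L^∞(ℝ³)`.  Then the integral operator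
with kernel `T(r; r') = N ∑_j conj(Ψ0(r)) Ψ0(r') / |r_j - r'_1|` is Hilbert–Schmidt:
the two-body Coulomb-squared integral `J = ∫∫ ρ0(r)ρ0(r')/|r-r'|² dr dr'` is finite and
`‖T‖²_{HS} = ∫∫ |T|² ≤ C · J` for some constant `C`. -/
theorem stmt16 (N : ℕ) [NeZero N]
    (Ψ0 : (Fin N → EuclideanSpace ℝ (Fin 3)) → ℂ)
    (hΨmeas : AEStronglyMeasurable Ψ0 volume)
    (hΨnorm : ∫⁻ q, (‖Ψ0 q‖₊ : ℝ≥0∞) ^ 2 = 1)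
    (ρ0 : EuclideanSpace ℝ (Fin 3) → ℝ)
    (hρmeas : Measurable ρ0) (hρpos : ∀ r, 0 ≤ ρ0 r)
    (hρ1 : MemLp ρ0 1 volume) (hρtop : MemLp ρ0 ⊤ volume)
    (hmarg : ∀ j : Fin N, ∀ φ : EuclideanSpace ℝ (Fin 3) → ℝ≥0∞, Measurable φ →
      ∫⁻ q, φ (q j) * (‖Ψ0 q‖₊ : ℝ≥0∞) ^ 2
        = (N : ℝ≥0∞)⁻¹ * ∫⁻ s, φ s * ENNReal.ofReal (ρ0 s)) :
    (∫⁻ (p : EuclideanSpace ℝ (Fin 3) × EuclideanSpace ℝ (Fin 3)),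
        ENNReal.ofReal (ρ0 p.1 * ρ0 p.2 / dist p.1 p.2 ^ 2)) < ⊤ ∧
    ∃ C : ℝ≥0,
      ∫⁻ (q : (Fin N → EuclideanSpace ℝ (Fin 3)) × (Fin N → EuclideanSpace ℝ (Fin 3))),
          (‖(N : ℂ) * ∑ j : Fin N,
              (starRingEnd ℂ) (Ψ0 q.1) * Ψ0 q.2 / ((dist (q.1 j) (q.2 0) : ℝ) : ℂ)‖₊ : ℝ≥0∞) ^ 2
        ≤ C * ∫⁻ (p : EuclideanSpace ℝ (Fin 3) × EuclideanSpace ℝ (Fin 3)),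
            ENNReal.ofReal (ρ0 p.1 * ρ0 p.2 / dist p.1 p.2 ^ 2) :=
  stmt16_general N Ψ0 hΨmeas ρ0 hρmeas hρ1 hρtop hmarg
end

section
/- Let $E$ be a Banach space of $\mu$-measurable functions on $\mathrm{supp}(\rho_0)$ such that (i) $\rho_0 \in E$, (ii) $E$ has the lattice property (if $|g| \le |f|$ a.e. with $f \in E$ then $g \in E$ with $\|g\|_E \le \|f\|_E$), (iii) $E \subseteq L^2_{1/\rho_0}$, and (iv) the operator $B : \{\Psi_0\}^\perp \to E$ is bounded. Then $E = L^2_{1/\rho_0}$. -/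
open MeasureTheory Complex ENNReal NNReal
open scoped ComplexConjugate

/-! For `f` with `∫ |f|² / ρ0 < ∞`, the quotient `g = |f| / ρ0` is square integrable for the finite
measure `ρ0 μ`; let `c` be its mean. The trial function `Φ(r, y) = (g r - c) Ψ0(r, y)` is then
square integrable, orthogonal to `Ψ0`, and `B Φ = (g - c) ρ0`. Hence `|f| = g ρ0 = B Φ + c ρ0` lies
in `E`, and so does `f` by the lattice property. -/

theorem memLp_two_iff_lintegral_enorm_sq_lt_top {α E : Type*} [MeasurableSpace α] {μ : Measure α}
    [NormedAddCommGroup E] {f : α → E} (hf : AEStronglyMeasurable f μ) :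
    MemLp f 2 μ ↔ ∫⁻ x, ‖f x‖ₑ ^ 2 ∂μ < ∞ := by
  rw [MemLp, eLpNorm_lt_top_iff_lintegral_rpow_enorm_lt_top two_ne_zero ofNat_ne_top]
  simp [hf]

section Weighted

variable {α E : Type*} [MeasurableSpace α] {μ : Measure α} [NormedAddCommGroup E] {f : α → E}
  {ρ : α → ℝ}

theorem ae_eq_zero_of_lintegral_enorm_sq_mul_inv_lt_top (hf : AEStronglyMeasurable f μ)
    (hρ : AEMeasurable ρ μ) (hfin : ∫⁻ r, ‖f r‖ₑ ^ 2 * (ENNReal.ofReal (ρ r))⁻¹ ∂μ < ∞) :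
    ∀ᵐ r ∂μ, ρ r = 0 → f r = 0 := by
  filter_upwards [ae_lt_top' ((hf.enorm.pow_const 2).mul hρ.ennreal_ofReal.inv) hfin.ne]
    with r hr hρr
  by_contra hfr
  simp [hρr, hfr] at hr

theorem memLp_norm_div_of_lintegral_enorm_sq_mul_inv_lt_top (hρ0 : ∀ r, 0 ≤ ρ r)
    (hf : AEStronglyMeasurable f μ) (hρ : AEMeasurable ρ μ)
    (hfin : ∫⁻ r, ‖f r‖ₑ ^ 2 * (ENNReal.ofReal (ρ r))⁻¹ ∂μ < ∞) :
    MemLp (fun r => ‖f r‖ / ρ r) 2 (μ.withDensity fun r => ENNReal.ofReal (ρ r)) := by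
  have hdiv : AEStronglyMeasurable (fun r => ‖f r‖ / ρ r) μ :=
    (hf.norm.aemeasurable.div hρ).aestronglyMeasurable
  refine (memLp_two_iff_lintegral_enorm_sq_lt_top
    (hdiv.mono_ac (withDensity_absolutelyContinuous _ _))).2 ?_
  rw [lintegral_withDensity_eq_lintegral_mul₀ hρ.ennreal_ofReal (hdiv.enorm.pow_const 2)]
  refine lt_of_le_of_lt (lintegral_mono fun r => ?_) hfin
  rcases (hρ0 r).eq_or_lt with hr | hr
  · simp [← hr]
  have hb : ENNReal.ofReal (ρ r) ≠ 0 := (ENNReal.ofReal_pos.2 hr).ne'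
  rw [Pi.mul_apply, ← ofReal_norm, Real.norm_of_nonneg (by positivity),
    ENNReal.ofReal_div_of_pos hr, ofReal_norm, div_eq_mul_inv, mul_pow, sq (ENNReal.ofReal _)⁻¹,
    mul_left_comm, ← mul_assoc (ENNReal.ofReal _), ENNReal.mul_inv_cancel hb ofReal_ne_top,
    one_mul]

end Weighted

noncomputable section

namespace NBody

variable {Ω T : Type*} [MeasurableSpace T] {ν : Measure T} {N : ℕ} {Ψ : Ω × T → ℂ}

def density (ν : Measure T) (N : ℕ) (Ψ : Ω × T → ℂ) (r : Ω) : ℝ :=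
  N * ∫ y, ‖Ψ (r, y)‖ ^ 2 ∂ν

/-- For `Φ ⊥ Ψ` this is the paper's `B Φ`. -/
def transitionDensity (ν : Measure T) (N : ℕ) (Ψ Φ : Ω × T → ℂ) (r : Ω) : ℂ :=
  N * ∫ y, conj (Ψ (r, y)) * Φ (r, y) ∂ν

theorem density_nonneg (r : Ω) : 0 ≤ density ν N Ψ r := by
  unfold density; positivity

theorem transitionDensity_fst_mul (g : Ω → ℝ) (r : Ω) :
    transitionDensity ν N Ψ (fun p => (g p.1 : ℂ) * Ψ p) r = (g r * density ν N Ψ r : ℝ) := by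
  have hfiber : ∀ y,
      conj (Ψ (r, y)) * ((g r : ℂ) * Ψ (r, y)) = g r * ((‖Ψ (r, y)‖ ^ 2 : ℝ) : ℂ) := fun y => by
    rw [mul_left_comm, conj_mul']; push_cast; rfl
  simp only [transitionDensity, density, hfiber, integral_const_mul, integral_complex_ofReal]
  push_cast
  ring

section Product

variable [MeasurableSpace Ω] {μ : Measure Ω}

theorem aestronglyMeasurable_fst_mul {g : Ω → ℝ} (hg : AEStronglyMeasurable g μ)
    (hΨ : AEStronglyMeasurable Ψ (μ.prod ν)) :
    AEStronglyMeasurable (fun p : Ω × T => (g p.1 : ℂ) * Ψ p) (μ.prod ν) :=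
  (Complex.continuous_ofReal.comp_aestronglyMeasurable
    (hg.comp_quasiMeasurePreserving Measure.quasiMeasurePreserving_fst)).mul hΨ

variable [SFinite ν]

theorem lintegral_enorm_fst_mul_sq {g : Ω → ℝ} (hg : AEStronglyMeasurable g μ)
    (hΨ : AEStronglyMeasurable Ψ (μ.prod ν)) :
    ∫⁻ p, ‖(g p.1 : ℂ) * Ψ p‖ₑ ^ 2 ∂(μ.prod ν)
      = ∫⁻ r, ‖g r‖ₑ ^ 2 * ∫⁻ y, ‖Ψ (r, y)‖ₑ ^ 2 ∂ν ∂μ := by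
  rw [lintegral_prod _ ((aestronglyMeasurable_fst_mul hg hΨ).enorm.pow_const 2)]
  refine lintegral_congr fun r => ?_
  have hreal : ‖(g r : ℂ)‖ₑ = ‖g r‖ₑ := by rw [← enorm_norm, Complex.norm_real, enorm_norm]
  simp only [enorm_mul, mul_pow, hreal]
  exact lintegral_const_mul' _ _ (pow_ne_top enorm_ne_top)

theorem integral_transitionDensity [SFinite μ] {Φ : Ω × T → ℂ}
    (h : Integrable (fun p => conj (Ψ p) * Φ p) (μ.prod ν)) :
    ∫ r, transitionDensity ν N Ψ Φ r ∂μ = N * ∫ p, conj (Ψ p) * Φ p ∂(μ.prod ν) := by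
  rw [integral_prod _ h, ← integral_const_mul]
  rfl

theorem integrable_density (hΨ : MemLp Ψ 2 (μ.prod ν)) : Integrable (density ν N Ψ) μ :=
  (hΨ.integrable_norm_pow two_ne_zero).integral_prod_left.const_mul _

theorem ofReal_density_ae_eq [SFinite μ] (hΨ : MemLp Ψ 2 (μ.prod ν)) :
    ∀ᵐ r ∂μ, ENNReal.ofReal (density ν N Ψ r) = N * ∫⁻ y, ‖Ψ (r, y)‖ₑ ^ 2 ∂ν := by
  filter_upwards [(hΨ.integrable_norm_pow two_ne_zero).prod_right_ae] with r hr
  rw [density, ENNReal.ofReal_mul (Nat.cast_nonneg N), ENNReal.ofReal_natCast,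
    ofReal_integral_eq_lintegral_ofReal hr (.of_forall fun y => by positivity)]
  simp_rw [ENNReal.ofReal_pow (norm_nonneg _), ofReal_norm]

theorem memLp_fst_mul [SFinite μ] (hΨ : MemLp Ψ 2 (μ.prod ν)) (hN : 0 < N) {g : Ω → ℝ}
    (hgμ : AEStronglyMeasurable g μ)
    (hg : MemLp g 2 (μ.withDensity fun r => ENNReal.ofReal (density ν N Ψ r))) :
    MemLp (fun p => (g p.1 : ℂ) * Ψ p) 2 (μ.prod ν) := by
  have hρ := (integrable_density hΨ (N := N)).aemeasurable.ennreal_ofReal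
  have hg2 := (memLp_two_iff_lintegral_enorm_sq_lt_top hg.1).1 hg
  rw [lintegral_withDensity_eq_lintegral_mul₀ hρ (hgμ.enorm.pow_const 2)] at hg2
  refine (memLp_two_iff_lintegral_enorm_sq_lt_top (aestronglyMeasurable_fst_mul hgμ hΨ.1)).2 ?_
  rw [lintegral_enorm_fst_mul_sq hgμ hΨ.1]
  refine lt_of_le_of_lt (lintegral_mono_ae ?_) hg2
  filter_upwards [ofReal_density_ae_eq hΨ] with r hr
  rw [Pi.mul_apply, hr, mul_comm]
  gcongr
  exact le_mul_of_one_le_left' (by exact_mod_cast hN)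

theorem natCast_mul_integral_conj_mul_fst_mul [SFinite μ] (hΨ : MemLp Ψ 2 (μ.prod ν))
    {g : Ω → ℝ} (hΦ : MemLp (fun p => (g p.1 : ℂ) * Ψ p) 2 (μ.prod ν)) :
    N * ∫ p, conj (Ψ p) * ((g p.1 : ℂ) * Ψ p) ∂(μ.prod ν)
      = ((∫ r, g r ∂(μ.withDensity fun r => ENNReal.ofReal (density ν N Ψ r)) : ℝ) : ℂ) := by
  have hρ := (integrable_density hΨ (N := N)).aemeasurable.ennreal_ofReal
  rw [← integral_transitionDensity (hΨ.star.integrable_mul hΦ),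
    integral_withDensity_eq_integral_toReal_smul₀ hρ (.of_forall fun _ => ofReal_lt_top)]
  simp_rw [transitionDensity_fst_mul, integral_complex_ofReal, toReal_ofReal (density_nonneg _),
    smul_eq_mul, mul_comm (g _)]

theorem ofReal_mul_density_mem [SFinite μ] (hΨ : MemLp Ψ 2 (μ.prod ν)) (hN : 0 < N)
    {E : Set (Ω → ℂ)} (hEadd : ∀ f ∈ E, ∀ g ∈ E, f + g ∈ E)
    (hEsmul : ∀ f ∈ E, ∀ a : ℂ, a • f ∈ E)
    (hρE : (fun r => (density ν N Ψ r : ℂ)) ∈ E)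
    (hB : ∀ Φ, MemLp Φ 2 (μ.prod ν) → ∫ p, conj (Ψ p) * Φ p ∂(μ.prod ν) = 0 →
      transitionDensity ν N Ψ Φ ∈ E)
    {g : Ω → ℝ} (hgμ : AEStronglyMeasurable g μ)
    (hg : MemLp g 2 (μ.withDensity fun r => ENNReal.ofReal (density ν N Ψ r))) :
    (fun r => ((g r * density ν N Ψ r : ℝ) : ℂ)) ∈ E := by
  set ρμ := μ.withDensity fun r => ENNReal.ofReal (density ν N Ψ r)
  have : IsFiniteMeasure ρμ := isFiniteMeasure_withDensity_ofReal (integrable_density hΨ).2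
  obtain ⟨c, hc⟩ : ∃ c, c = ⨍ r, g r ∂ρμ := ⟨_, rfl⟩
  have hΦ := memLp_fst_mul hΨ hN (g := fun r => g r - c) (hgμ.sub aestronglyMeasurable_const)
    (hg.sub (memLp_const c))
  have horth : ∫ p, conj (Ψ p) * (((g p.1 - c : ℝ) : ℂ) * Ψ p) ∂(μ.prod ν) = 0 := by
    have h := natCast_mul_integral_conj_mul_fst_mul hΨ (N := N) (g := fun r => g r - c) hΦ
    have hmean : ∫ r, g r - c ∂ρμ = 0 := hc ▸ integral_sub_average ρμ g
    rw [hmean, Complex.ofReal_zero] at h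
    exact (mul_eq_zero.1 h).resolve_left (by exact_mod_cast hN.ne')
  have hsplit : (fun r => ((g r * density ν N Ψ r : ℝ) : ℂ))
      = transitionDensity ν N Ψ (fun p => ((g p.1 - c : ℝ) : ℂ) * Ψ p)
        + (c : ℂ) • fun r => (density ν N Ψ r : ℂ) := by
    funext r
    rw [Pi.add_apply, transitionDensity_fst_mul (fun r => g r - c), Pi.smul_apply, smul_eq_mul]
    push_cast
    ring
  rw [hsplit]
  exact hEadd _ (hB _ hΦ horth) _ (hEsmul _ hρE c)

end Product

end NBody

end

-- `⋀^N L²(Ω)` is modelled as `L²(Ω × T)`, `T` carrying the remaining `N - 1` coordinates.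
theorem stmt19_general {Ω T : Type*} [MeasurableSpace Ω] [MeasurableSpace T]
    (μ : Measure Ω) (ν : Measure T) [SigmaFinite μ] [SigmaFinite ν]
    (N : ℕ) (hN : 0 < N)
    (Ψ0 : Ω × T → ℂ) (hΨ0 : MemLp Ψ0 2 (μ.prod ν))
    (ρ0 : Ω → ℝ)
    (hρ0 : ∀ r, ρ0 r = N * ∫ y, ‖Ψ0 (r, y)‖ ^ 2 ∂ν)
    (E : Set (Ω → ℂ)) (nE : (Ω → ℂ) → ℝ)
    (hEadd : ∀ f ∈ E, ∀ g ∈ E, f + g ∈ E)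
    (hEsmul : ∀ f ∈ E, ∀ a : ℂ, a • f ∈ E)
    (hρE : (fun r => (ρ0 r : ℂ)) ∈ E)
    (hlattice : ∀ f ∈ E, ∀ g : Ω → ℂ, AEStronglyMeasurable g μ →
      (∀ᵐ r ∂μ, ‖g r‖ ≤ ‖f r‖) → g ∈ E ∧ nE g ≤ nE f)
    (hsub : ∀ f ∈ E, ∫⁻ r, (‖f r‖₊ : ℝ≥0∞) ^ 2 * (ENNReal.ofReal (ρ0 r))⁻¹ ∂μ < ⊤)
    (hB : ∃ C : ℝ, ∀ Φ : Ω × T → ℂ, MemLp Φ 2 (μ.prod ν) →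
      (∫ p, (starRingEnd ℂ) (Ψ0 p) * Φ p ∂(μ.prod ν)) = 0 →
      (fun r => (N : ℂ) * ∫ y, (starRingEnd ℂ) (Ψ0 (r, y)) * Φ (r, y) ∂ν) ∈ E ∧
        nE (fun r => (N : ℂ) * ∫ y, (starRingEnd ℂ) (Ψ0 (r, y)) * Φ (r, y) ∂ν)
          ≤ C * (eLpNorm Φ 2 (μ.prod ν)).toReal) :
    ∀ f : Ω → ℂ, AEStronglyMeasurable f μ →
      (f ∈ E ↔ ∫⁻ r, (‖f r‖₊ : ℝ≥0∞) ^ 2 * (ENNReal.ofReal (ρ0 r))⁻¹ ∂μ < ⊤) := by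
  obtain ⟨_, hBC⟩ := hB
  obtain rfl : ρ0 = NBody.density ν N Ψ0 := funext hρ0
  intro f hf
  refine ⟨hsub f, fun hfin => ?_⟩
  have hρ := (NBody.integrable_density hΨ0 (N := N)).aemeasurable
  have hgρ := NBody.ofReal_mul_density_mem hΨ0 hN hEadd hEsmul hρE
    (fun Φ hΦ horth => (hBC Φ hΦ horth).1)
    (g := fun r => ‖f r‖ / NBody.density ν N Ψ0 r)
    (hf.norm.aemeasurable.div hρ).aestronglyMeasurable
    (memLp_norm_div_of_lintegral_enorm_sq_mul_inv_lt_top NBody.density_nonneg hf hρ hfin)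
  refine (hlattice _ hgρ f hf ?_).1
  filter_upwards [ae_eq_zero_of_lintegral_enorm_sq_mul_inv_lt_top hf hρ hfin] with r hr
  rw [div_mul_cancel_of_imp fun h => norm_eq_zero.2 (hr h), Complex.norm_real, norm_norm]

/-- **minimality of `L²_{1/ρ0}`.**  Let `Ψ0` be a normalized `N`-body
wave function (the `N`-body space `⋀^N L²(Ω)` being modelled as `L²(Ω × T)`, with `T`
abstracting the last `N−1` coordinates) with density `ρ0`.  Let `E` be a Banach function
space (a linear space of measurable functions with a norm `nE`) on `supp ρ0` such that
(i) `ρ0 ∈ E`, (ii) `E` has the lattice property, (iii) `E ⊆ L²_{1/ρ0}`, and (iv)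
`B : {Ψ0}^⊥ → E` is bounded.  Then `E = L²_{1/ρ0}` (membership in `L²_{1/ρ0}` being
expressed by finiteness of `∫ |f|² ρ0⁻¹`, with the weight `∞` off `supp ρ0`). -/
theorem stmt19 {Ω T : Type*} [MeasurableSpace Ω] [MeasurableSpace T]
    (μ : Measure Ω) (ν : Measure T) [SigmaFinite μ] [SigmaFinite ν]
    (N : ℕ) (hN : 0 < N)
    (Ψ0 : Ω × T → ℂ) (hΨ0 : MemLp Ψ0 2 (μ.prod ν))
    (hΨ0norm : ∫ p, ‖Ψ0 p‖ ^ 2 ∂(μ.prod ν) = 1)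
    (ρ0 : Ω → ℝ)
    (hρ0 : ∀ r, ρ0 r = N * ∫ y, ‖Ψ0 (r, y)‖ ^ 2 ∂ν)
    (E : Set (Ω → ℂ)) (nE : (Ω → ℂ) → ℝ)
    (hEmeas : ∀ f ∈ E, AEStronglyMeasurable f μ)
    (hEadd : ∀ f ∈ E, ∀ g ∈ E, f + g ∈ E)
    (hEsmul : ∀ f ∈ E, ∀ a : ℂ, a • f ∈ E)
    (hρE : (fun r => (ρ0 r : ℂ)) ∈ E)
    (hlattice : ∀ f ∈ E, ∀ g : Ω → ℂ, AEStronglyMeasurable g μ →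
      (∀ᵐ r ∂μ, ‖g r‖ ≤ ‖f r‖) → g ∈ E ∧ nE g ≤ nE f)
    (hsub : ∀ f ∈ E, ∫⁻ r, (‖f r‖₊ : ℝ≥0∞) ^ 2 * (ENNReal.ofReal (ρ0 r))⁻¹ ∂μ < ⊤)
    (hB : ∃ C : ℝ, ∀ Φ : Ω × T → ℂ, MemLp Φ 2 (μ.prod ν) →
      (∫ p, (starRingEnd ℂ) (Ψ0 p) * Φ p ∂(μ.prod ν)) = 0 →
      (fun r => (N : ℂ) * ∫ y, (starRingEnd ℂ) (Ψ0 (r, y)) * Φ (r, y) ∂ν) ∈ E ∧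
        nE (fun r => (N : ℂ) * ∫ y, (starRingEnd ℂ) (Ψ0 (r, y)) * Φ (r, y) ∂ν)
          ≤ C * (eLpNorm Φ 2 (μ.prod ν)).toReal) :
    ∀ f : Ω → ℂ, AEStronglyMeasurable f μ →
      (f ∈ E ↔ ∫⁻ r, (‖f r‖₊ : ℝ≥0∞) ^ 2 * (ENNReal.ofReal (ρ0 r))⁻¹ ∂μ < ⊤) :=
  stmt19_general μ ν N hN Ψ0 hΨ0 ρ0 hρ0 E nE hEadd hEsmul hρE hlattice hsub hB
end
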